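/- arXiv:2110.14640 — 7 statements merged into one kernel-verified Lean document; each statement's English description precedes it below -/
import Mathlib

section
/- Let N ≥ 3 be an integer, Ω ⊂ ℝ^N a nonempty bounded open set, a, b : ℝ^N → ℝ continuous and positive on the closure of Ω, and λ₁ᵃ, λ₁ᵇ > 0. Suppose φ_a, φ_b : ℝ^N → ℝ are C¹ on Ω, vanish outside Ω, are positive on Ω, lie in L^q(Ω) with finite nonzero L^q norm, have square-integrable gradients over Ω, and satisfy ∫_Ω a(x)|∇φ_a(x)|² dx = λ₁ᵃ ∫_Ω φ_a(x)² dx and ∫_Ω b(x)|∇φ_b(x)|² dx = λ₁ᵇ ∫_Ω φ_b(x)² dx. Then for every λ ≥ (‖φ_a‖_{L^q(Ω)} ‖φ_b‖_{L^q(Ω)} / ∫_Ω φ_a φ_b dx) · |Ω|^{1−2/q} · max(λ₁ᵃ, λ₁ᵇ), one has F_λ(φ_a/‖φ_a‖_{L^q(Ω)}, φ_b/‖φ_b‖_{L^q(Ω)}) ≤ 0, where |Ω| denotes the Lebesgue measure of Ω. -/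
/-!
After dividing by `‖φ‖_q`, the eigenvalue identity turns the weighted Dirichlet energy of `φ`
into `λ₁ ∫_Ω φ² / ‖φ‖_q²`, and Hölder's inequality with exponents `q/2`, `q/(q-2)` gives
`∫_Ω φ² ≤ ‖φ‖_q² |Ω|^(1-2/q)`. So each of the two energies is at most
`max λ₁ᵃ λ₁ᵇ · |Ω|^(1-2/q)`, and the lower bound on `λ` is exactly what makes the coupling term
`λ ∫_Ω φ_a φ_b / (‖φ_a‖_q ‖φ_b‖_q)` at least this large. Here `∫_Ω φ_a φ_b > 0` because `φ_a φ_b > 0`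
on `Ω`, which is not a null set since `∫_Ω |φ_a|^q ≠ 0`.
-/

open MeasureTheory Filter

theorem norm_fderiv_div_const {E : Type*} [NormedAddCommGroup E] [NormedSpace ℝ E]
    (f : E → ℝ) (c : ℝ) (x : E) :
    ‖fderiv ℝ (fun y => f y / c) x‖ = ‖fderiv ℝ f x‖ / |c| := by
  have hf : (fun y => f y / c) = c⁻¹ • f := by
    ext y
    simp [div_eq_inv_mul]
  rw [hf, fderiv_const_smul_field, Pi.smul_apply, norm_smul, norm_inv, Real.norm_eq_abs,
    inv_mul_eq_div]

theorem integral_abs_rpow_le_of_memLp {α : Type*} [MeasurableSpace α] {μ : Measure α}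
    [IsFiniteMeasure μ] {f : α → ℝ} {p q : ℝ} (hp : 0 < p) (hpq : p < q)
    (hf : MemLp f (ENNReal.ofReal q) μ) :
    ∫ x, |f x| ^ p ∂μ ≤ (∫ x, |f x| ^ q ∂μ) ^ (p / q) * μ.real Set.univ ^ (1 - p / q) := by
  have hq : 0 < q := hp.trans hpq
  have hconj : (q / p).HolderConjugate (q / (q - p)) := by
    rw [Real.holderConjugate_iff]
    refine ⟨(one_lt_div hp).2 hpq, ?_⟩
    field_simp
    ring
  have hfp : MemLp (fun x => |f x| ^ p) (ENNReal.ofReal (q / p)) μ := by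
    simpa [ENNReal.toReal_ofReal hp.le, ENNReal.ofReal_div_of_pos hp, Real.norm_eq_abs]
      using hf.norm_rpow_div (ENNReal.ofReal p)
  have holder := integral_mul_le_Lp_mul_Lq_of_nonneg hconj
    (Eventually.of_forall fun x => Real.rpow_nonneg (abs_nonneg (f x)) p)
    (Eventually.of_forall fun _ => zero_le_one) hfp (memLp_const (1 : ℝ))
  have hpow : ∀ x, (|f x| ^ p) ^ (q / p) = |f x| ^ q := fun x => by
    rw [← Real.rpow_mul (abs_nonneg _), mul_div_cancel₀ q hp.ne']
  simp only [mul_one, hpow, Real.one_rpow, integral_const, smul_eq_mul] at holder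
  convert holder using 3 <;> field_simp

theorem integral_abs_rpow_pos {α : Type*} [MeasurableSpace α] {μ : Measure α} {f : α → ℝ}
    {q : ℝ} (hf : ∫ x, |f x| ^ q ∂μ ≠ 0) : 0 < ∫ x, |f x| ^ q ∂μ :=
  (integral_nonneg fun x => Real.rpow_nonneg (abs_nonneg (f x)) q).lt_of_ne' hf

theorem setIntegral_mul_norm_fderiv_div_sq_le {E : Type*} [NormedAddCommGroup E]
    [NormedSpace ℝ E] [MeasurableSpace E] {μ : Measure E} {Ω : Set E} {w φ : E → ℝ} {lam q : ℝ}
    (hq : 2 < q) (hΩ : μ Ω ≠ ⊤) (hlam : 0 ≤ lam) (hφ : MemLp φ (ENNReal.ofReal q) (μ.restrict Ω))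
    (hφq : ∫ x in Ω, |φ x| ^ q ∂μ ≠ 0)
    (heig : ∫ x in Ω, w x * ‖fderiv ℝ φ x‖ ^ 2 ∂μ = lam * ∫ x in Ω, φ x ^ 2 ∂μ) :
    ∫ x in Ω, w x * ‖fderiv ℝ (fun y => φ y / (∫ x in Ω, |φ x| ^ q ∂μ) ^ (1 / q)) x‖ ^ 2 ∂μ
      ≤ lam * μ.real Ω ^ (1 - 2 / q) := by
  have : IsFiniteMeasure (μ.restrict Ω) := isFiniteMeasure_restrict.2 hΩ
  set Nφ := ∫ x in Ω, |φ x| ^ q ∂μ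
  have hNφ : 0 < Nφ := integral_abs_rpow_pos hφq
  have hA_sq : (Nφ ^ (1 / q)) ^ 2 = Nφ ^ (2 / q) := by
    rw [← Real.rpow_mul_natCast hNφ.le]
    ring_nf
  have hL2 : ∫ x in Ω, φ x ^ 2 ∂μ ≤ Nφ ^ (2 / q) * μ.real Ω ^ (1 - 2 / q) := by
    simpa [Real.rpow_two, sq_abs, Measure.real] using
      integral_abs_rpow_le_of_memLp two_pos hq hφ
  calc ∫ x in Ω, w x * ‖fderiv ℝ (fun y => φ y / Nφ ^ (1 / q)) x‖ ^ 2 ∂μ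
      = lam * (∫ x in Ω, φ x ^ 2 ∂μ) / (Nφ ^ (1 / q)) ^ 2 := by
        simp_rw [norm_fderiv_div_const, div_pow, sq_abs, ← mul_div_assoc]
        rw [integral_div, heig]
    _ ≤ lam * (Nφ ^ (2 / q) * μ.real Ω ^ (1 - 2 / q)) / (Nφ ^ (1 / q)) ^ 2 := by gcongr
    _ = lam * μ.real Ω ^ (1 - 2 / q) := by
        rw [hA_sq]
        field_simp

theorem setIntegral_mul_pos {α : Type*} [MeasurableSpace α] {μ : Measure α} {Ω : Set α}
    {f g : α → ℝ} (hΩ : MeasurableSet Ω) (hΩ0 : μ Ω ≠ 0) (hf : ∀ x ∈ Ω, 0 < f x)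
    (hg : ∀ x ∈ Ω, 0 < g x) (hfg : IntegrableOn (fun x => f x * g x) Ω μ) :
    0 < ∫ x in Ω, f x * g x ∂μ := by
  have hpos : ∀ x ∈ Ω, 0 < f x * g x := fun x hx => mul_pos (hf x hx) (hg x hx)
  rw [setIntegral_pos_iff_support_of_nonneg_ae
    (ae_restrict_of_forall_mem hΩ fun x hx => (hpos x hx).le) hfg]
  exact (pos_iff_ne_zero.2 hΩ0).trans_le
    (measure_mono fun x hx => ⟨(hpos x hx).ne', hx⟩)

theorem le_mul_integral_div_mul_div {α : Type*} [MeasurableSpace α] {μ : Measure α}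
    {f g : α → ℝ} {A B c lam : ℝ} (hA : 0 < A) (hB : 0 < B) (hfg : 0 < ∫ x, f x * g x ∂μ)
    (hlam : lam ≥ A * B / (∫ x, f x * g x ∂μ) * c) :
    c ≤ lam * ∫ x, f x / A * (g x / B) ∂μ := by
  simp_rw [div_mul_div_comm]
  rw [integral_div, mul_div_assoc', le_div_iff₀ (by positivity)]
  calc c * (A * B) = A * B / (∫ x, f x * g x ∂μ) * c * ∫ x, f x * g x ∂μ := by
        field_simp
    _ ≤ lam * ∫ x, f x * g x ∂μ := by gcongr

theorem stmt_1_general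
    (N : ℕ) (hN : 3 ≤ N)
    (Ω : Set (EuclideanSpace ℝ (Fin N)))
    (hΩo : IsOpen Ω) (hΩb : Bornology.IsBounded Ω)
    (a b : EuclideanSpace ℝ (Fin N) → ℝ)
    (lam1a lam1b : ℝ) (hlam1a : 0 < lam1a) (hlam1b : 0 < lam1b)
    (q : ℝ) (hq : q = 2 * (N : ℝ) / ((N : ℝ) - 2))
    (φa φb : EuclideanSpace ℝ (Fin N) → ℝ)
    (hφapos : ∀ x ∈ Ω, 0 < φa x) (hφbpos : ∀ x ∈ Ω, 0 < φb x)
    (hφaLq : MemLp φa (ENNReal.ofReal q) (volume.restrict Ω))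
    (hφbLq : MemLp φb (ENNReal.ofReal q) (volume.restrict Ω))
    (hφaLqne : (∫ x in Ω, |φa x| ^ q) ≠ 0)
    (hφbLqne : (∫ x in Ω, |φb x| ^ q) ≠ 0)
    (heiga : (∫ x in Ω, a x * ‖fderiv ℝ φa x‖ ^ 2) = lam1a * ∫ x in Ω, (φa x) ^ 2)
    (heigb : (∫ x in Ω, b x * ‖fderiv ℝ φb x‖ ^ 2) = lam1b * ∫ x in Ω, (φb x) ^ 2)
    (lam : ℝ)
    (hlam : lam ≥
      ((∫ x in Ω, |φa x| ^ q) ^ (1 / q) * (∫ x in Ω, |φb x| ^ q) ^ (1 / q)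
          / ∫ x in Ω, φa x * φb x)
        * (volume Ω).toReal ^ (1 - 2 / q) * max lam1a lam1b) :
    (1 / 2) * (∫ x in Ω, a x *
        ‖fderiv ℝ (fun y => φa y / (∫ x in Ω, |φa x| ^ q) ^ (1 / q)) x‖ ^ 2)
      + (1 / 2) * (∫ x in Ω, b x *
        ‖fderiv ℝ (fun y => φb y / (∫ x in Ω, |φb x| ^ q) ^ (1 / q)) x‖ ^ 2)
      - lam * ∫ x in Ω,
          (φa x / (∫ x in Ω, |φa x| ^ q) ^ (1 / q)) *
          (φb x / (∫ x in Ω, |φb x| ^ q) ^ (1 / q))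
    ≤ 0 := by
  have hq2 : 2 < q := by
    have hN3 : (3 : ℝ) ≤ N := by exact_mod_cast hN
    rw [hq, lt_div_iff₀ (by linarith)]
    linarith
  have hΩfin : volume Ω ≠ ⊤ := hΩb.measure_lt_top.ne
  have : IsFiniteMeasure (volume.restrict Ω) := isFiniteMeasure_restrict.2 hΩfin
  have hΩ0 : volume Ω ≠ 0 := fun h => hφaLqne (by simp [Measure.restrict_eq_zero.2 h])
  have hEa := setIntegral_mul_norm_fderiv_div_sq_le hq2 hΩfin hlam1a.le hφaLq hφaLqne heiga
  have hEb := setIntegral_mul_norm_fderiv_div_sq_le hq2 hΩfin hlam1b.le hφbLq hφbLqne heigb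
  have h2q : (2 : ENNReal) ≤ ENNReal.ofReal q := by
    simpa using ENNReal.ofReal_le_ofReal hq2.le
  have hI := setIntegral_mul_pos hΩo.measurableSet hΩ0 hφapos hφbpos
    ((hφaLq.mono_exponent h2q).integrable_mul (hφbLq.mono_exponent h2q))
  rw [mul_assoc] at hlam
  have hcross := le_mul_integral_div_mul_div
    (Real.rpow_pos_of_pos (integral_abs_rpow_pos hφaLqne) _)
    (Real.rpow_pos_of_pos (integral_abs_rpow_pos hφbLqne) _) hI hlam
  have hV : 0 ≤ (volume Ω).toReal ^ (1 - 2 / q) := by positivity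
  have hMa := mul_le_mul_of_nonneg_right (le_max_left lam1a lam1b) hV
  have hMb := mul_le_mul_of_nonneg_right (le_max_right lam1a lam1b) hV
  simp only [Measure.real] at hEa hEb
  linarith

theorem stmt_1
    (N : ℕ) (hN : 3 ≤ N)
    (Ω : Set (EuclideanSpace ℝ (Fin N)))
    (hΩo : IsOpen Ω) (hΩb : Bornology.IsBounded Ω) (hΩne : Ω.Nonempty)
    (a b : EuclideanSpace ℝ (Fin N) → ℝ)
    (ha : Continuous a) (hb : Continuous b)
    (hapos : ∀ x ∈ closure Ω, 0 < a x) (hbpos : ∀ x ∈ closure Ω, 0 < b x)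
    (lam1a lam1b : ℝ) (hlam1a : 0 < lam1a) (hlam1b : 0 < lam1b)
    (q : ℝ) (hq : q = 2 * (N : ℝ) / ((N : ℝ) - 2))
    (φa φb : EuclideanSpace ℝ (Fin N) → ℝ)
    (hφa : ContDiffOn ℝ 1 φa Ω) (hφb : ContDiffOn ℝ 1 φb Ω)
    (hφa0 : ∀ x ∉ Ω, φa x = 0) (hφb0 : ∀ x ∉ Ω, φb x = 0)
    (hφapos : ∀ x ∈ Ω, 0 < φa x) (hφbpos : ∀ x ∈ Ω, 0 < φb x)
    (hφaLq : MemLp φa (ENNReal.ofReal q) (volume.restrict Ω))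
    (hφbLq : MemLp φb (ENNReal.ofReal q) (volume.restrict Ω))
    (hφaLqne : (∫ x in Ω, |φa x| ^ q) ≠ 0)
    (hφbLqne : (∫ x in Ω, |φb x| ^ q) ≠ 0)
    (hφagrad : IntegrableOn (fun x => ‖fderiv ℝ φa x‖ ^ 2) Ω)
    (hφbgrad : IntegrableOn (fun x => ‖fderiv ℝ φb x‖ ^ 2) Ω)
    (heiga : (∫ x in Ω, a x * ‖fderiv ℝ φa x‖ ^ 2) = lam1a * ∫ x in Ω, (φa x) ^ 2)
    (heigb : (∫ x in Ω, b x * ‖fderiv ℝ φb x‖ ^ 2) = lam1b * ∫ x in Ω, (φb x) ^ 2)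
    (lam : ℝ)
    (hlam : lam ≥
      ((∫ x in Ω, |φa x| ^ q) ^ (1 / q) * (∫ x in Ω, |φb x| ^ q) ^ (1 / q)
          / ∫ x in Ω, φa x * φb x)
        * (volume Ω).toReal ^ (1 - 2 / q) * max lam1a lam1b) :
    (1 / 2) * (∫ x in Ω, a x *
        ‖fderiv ℝ (fun y => φa y / (∫ x in Ω, |φa x| ^ q) ^ (1 / q)) x‖ ^ 2)
      + (1 / 2) * (∫ x in Ω, b x *
        ‖fderiv ℝ (fun y => φb y / (∫ x in Ω, |φb x| ^ q) ^ (1 / q)) x‖ ^ 2)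
      - lam * ∫ x in Ω,
          (φa x / (∫ x in Ω, |φa x| ^ q) ^ (1 / q)) *
          (φb x / (∫ x in Ω, |φb x| ^ q) ^ (1 / q))
    ≤ 0 :=
  stmt_1_general N hN Ω hΩo hΩb a b lam1a lam1b hlam1a hlam1b q hq φa φb hφapos hφbpos hφaLq hφbLq
    hφaLqne hφbLqne heiga heigb lam hlam
end

section
/- Let N ≥ 4 be an integer, Ω ⊂ ℝ^N a nonempty bounded open set, x₀ ∈ Ω, and ζ a smooth function compactly supported in Ω with 0 ≤ ζ ≤ 1 and ζ ≡ 1 on a neighborhood of x₀. Then, as ε → 0⁺, ∫_{ℝ^N} |∇u_{x₀,ε}(x)|² dx = K₁ + O(ε^{(N−2)/2}); that is, the function ε ↦ ∫_{ℝ^N}|∇u_{x₀,ε}|²dx − K₁ is big-O of ε^{(N−2)/2} along the filter of punctured right-neighborhoods of 0. -/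
open MeasureTheory Real Filter Topology Asymptotics

noncomputable section

variable {N : ℕ}
local notation "E" => EuclideanSpace ℝ (Fin N)

lemma aux_deriv (x₀ : E) {ε : ℝ} (hε : 0 < ε) (x : E) :
    HasFDerivAt (fun x : E => ε ^ (((N : ℝ) - 2) / 4) / (ε + ‖x - x₀‖ ^ 2) ^ (((N : ℝ) - 2) / 2))
      ((ε ^ (((N : ℝ) - 2) / 4) * (-(((N : ℝ) - 2) / 2) *
          (ε + ‖x - x₀‖ ^ 2) ^ (-(((N : ℝ) - 2) / 2) - 1) * 2)) • (innerSL ℝ (x - x₀))) x := by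
  have hq : ∀ y : E, (0:ℝ) < ε + ‖y - x₀‖ ^ 2 := fun y => by positivity
  have h1 : HasFDerivAt (fun y : E => ‖y - x₀‖ ^ 2) ((2:ℝ) • (innerSL ℝ (x - x₀))) x := by
    have h := ((hasFDerivAt_id x).sub_const x₀).norm_sq
    refine h.congr_fderiv ?_
    ext v
    simp [two_smul]
  have h2 : HasFDerivAt (fun y : E => ε + ‖y - x₀‖ ^ 2) ((2:ℝ) • (innerSL ℝ (x - x₀))) x :=
    h1.const_add ε
  have h3 : HasFDerivAt (fun y : E => (ε + ‖y - x₀‖ ^ 2) ^ (-(((N : ℝ) - 2) / 2)))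
      ((-(((N : ℝ) - 2) / 2) * (ε + ‖x - x₀‖ ^ 2) ^ (-(((N : ℝ) - 2) / 2) - 1)) •
        ((2:ℝ) • (innerSL ℝ (x - x₀)))) x :=
    h2.rpow_const (Or.inl (hq x).ne')
  have h4 := h3.const_mul (ε ^ (((N : ℝ) - 4) / 4 + 2 / 4))
  have h44 : ((N : ℝ) - 4) / 4 + 2 / 4 = ((N : ℝ) - 2) / 4 := by ring
  rw [h44] at h4
  have heq : (fun y : E => ε ^ (((N : ℝ) - 2) / 4) / (ε + ‖y - x₀‖ ^ 2) ^ (((N : ℝ) - 2) / 2))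
      = fun y : E => ε ^ (((N : ℝ) - 2) / 4) * (ε + ‖y - x₀‖ ^ 2) ^ (-(((N : ℝ) - 2) / 2)) := by
    funext y
    rw [Real.rpow_neg (hq y).le, div_eq_mul_inv]
  rw [heq]
  refine h4.congr_fderiv ?_
  rw [smul_smul, smul_smul]
  ring_nf

lemma aux_normsq (x₀ : E) {ε : ℝ} (hε : 0 < ε) (x : E) :
    ‖fderiv ℝ (fun x : E => ε ^ (((N : ℝ) - 2) / 4) / (ε + ‖x - x₀‖ ^ 2) ^ (((N : ℝ) - 2) / 2)) x‖ ^ 2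
      = ((N : ℝ) - 2) ^ 2 * ε ^ (((N : ℝ) - 2) / 2) *
        (‖x - x₀‖ ^ 2 * (ε + ‖x - x₀‖ ^ 2) ^ (-(N : ℝ))) := by
  have hq : (0:ℝ) < ε + ‖x - x₀‖ ^ 2 := by positivity
  rw [(aux_deriv x₀ hε x).fderiv, norm_smul, innerSL_apply_norm]
  rw [Real.norm_eq_abs, mul_pow, sq_abs]
  have e1 : (ε ^ (((N : ℝ) - 2) / 4)) ^ (2:ℕ) = ε ^ (((N : ℝ) - 2) / 2) := by
    rw [← Real.rpow_natCast (ε ^ (((N : ℝ) - 2) / 4)) 2, ← Real.rpow_mul hε.le]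
    congr 1
    ring
  have e2 : ((ε + ‖x - x₀‖ ^ 2) ^ (-(((N : ℝ) - 2) / 2) - 1)) ^ (2:ℕ)
      = (ε + ‖x - x₀‖ ^ 2) ^ (-(N : ℝ)) := by
    rw [← Real.rpow_natCast ((ε + ‖x - x₀‖ ^ 2) ^ (-(((N : ℝ) - 2) / 2) - 1)) 2,
      ← Real.rpow_mul hq.le]
    congr 1
    ring
  have expand : (ε ^ (((N : ℝ) - 2) / 4) * (-(((N : ℝ) - 2) / 2) *
      (ε + ‖x - x₀‖ ^ 2) ^ (-(((N : ℝ) - 2) / 2) - 1) * 2)) ^ 2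
      = (ε ^ (((N : ℝ) - 2) / 4)) ^ (2:ℕ) *
        (((ε + ‖x - x₀‖ ^ 2) ^ (-(((N : ℝ) - 2) / 2) - 1)) ^ (2:ℕ) * (((N : ℝ) - 2) ^ 2)) := by
    ring
  rw [expand, e1, e2]
  ring

lemma aux_int_base (hN : 4 ≤ N) :
    Integrable (fun y : E => ‖y‖ ^ 2 * (1 + ‖y‖ ^ 2) ^ (-(N : ℝ))) := by
  have hfin : (Module.finrank ℝ (EuclideanSpace ℝ (Fin N)) : ℝ) < 2 * (N:ℝ) - 2 := by
    rw [finrank_euclideanSpace_fin]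
    have : (4:ℝ) ≤ N := by exact_mod_cast hN
    linarith
  have hint := integrable_rpow_neg_one_add_norm_sq (μ := (volume : Measure E)) hfin
  have hcont : Continuous fun y : E => ‖y‖ ^ 2 * (1 + ‖y‖ ^ 2) ^ (-(N : ℝ)) := by
    have h1 : Continuous fun y : E => (1:ℝ) + ‖y‖ ^ 2 := by continuity
    exact (continuous_norm.pow 2).mul
      (h1.rpow_const fun y => Or.inl (by positivity))
  refine hint.mono' hcont.aestronglyMeasurable (Eventually.of_forall fun y => ?_)
  have h0 : (0:ℝ) < 1 + ‖y‖ ^ 2 := by positivity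
  have hnn : (0:ℝ) ≤ ‖y‖ ^ 2 * (1 + ‖y‖ ^ 2) ^ (-(N : ℝ)) := by positivity
  rw [Real.norm_eq_abs, abs_of_nonneg hnn]
  calc ‖y‖ ^ 2 * (1 + ‖y‖ ^ 2) ^ (-(N : ℝ))
      ≤ (1 + ‖y‖ ^ 2) * (1 + ‖y‖ ^ 2) ^ (-(N : ℝ)) := by
        apply mul_le_mul_of_nonneg_right (by nlinarith) (Real.rpow_nonneg h0.le _)
    _ = (1 + ‖y‖ ^ 2) ^ (-(2 * (N:ℝ) - 2) / 2) := by
        rw [show (-(2 * (N:ℝ) - 2) / 2) = 1 + -(N:ℝ) by ring, Real.rpow_add h0, Real.rpow_one]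

lemma aux_int_shift (hN : 4 ≤ N) (x₀ : E) :
    Integrable (fun x : E => (1 + ‖x - x₀‖ ^ 2) ^ (1 - (N : ℝ))) := by
  have hfin : (Module.finrank ℝ (EuclideanSpace ℝ (Fin N)) : ℝ) < 2 * (N:ℝ) - 2 := by
    rw [finrank_euclideanSpace_fin]
    have : (4:ℝ) ≤ N := by exact_mod_cast hN
    linarith
  have hint := integrable_rpow_neg_one_add_norm_sq (μ := (volume : Measure E)) hfin
  have : (fun y : E => (1 + ‖y‖ ^ 2) ^ (-(2 * (N:ℝ) - 2) / 2))
      = fun y : E => (1 + ‖y‖ ^ 2) ^ (1 - (N : ℝ)) := by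
    funext y; congr 1; ring
  rw [this] at hint
  exact hint.comp_sub_right x₀

lemma aux_integral (hN : 4 ≤ N) (x₀ : E) {ε : ℝ} (hε : 0 < ε) :
    ∫ x : E, ‖x - x₀‖ ^ 2 * (ε + ‖x - x₀‖ ^ 2) ^ (-(N : ℝ))
      = ε ^ (1 - (N : ℝ) / 2) * ∫ y : E, ‖y‖ ^ 2 * (1 + ‖y‖ ^ 2) ^ (-(N : ℝ)) := by
  have htrans := integral_sub_right_eq_self (μ := (volume : Measure E))
    (fun y : E => ‖y‖ ^ 2 * (ε + ‖y‖ ^ 2) ^ (-(N : ℝ))) x₀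
  rw [htrans]
  have hR : (0:ℝ) < Real.sqrt ε := Real.sqrt_pos.2 hε
  have hscale := Measure.integral_comp_smul_of_nonneg (μ := (volume : Measure E))
    (fun y : E => ‖y‖ ^ 2 * (ε + ‖y‖ ^ 2) ^ (-(N : ℝ))) (Real.sqrt ε) (hR := hR.le)
  have heq : (fun x : E => ‖Real.sqrt ε • x‖ ^ 2 * (ε + ‖Real.sqrt ε • x‖ ^ 2) ^ (-(N : ℝ)))
      = fun x : E => (ε * ε ^ (-(N : ℝ))) * (‖x‖ ^ 2 * (1 + ‖x‖ ^ 2) ^ (-(N : ℝ))) := by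
    funext x
    have h1 : ‖Real.sqrt ε • x‖ ^ 2 = ε * ‖x‖ ^ 2 := by
      rw [norm_smul, Real.norm_eq_abs, abs_of_nonneg (Real.sqrt_nonneg ε), mul_pow,
        Real.sq_sqrt hε.le]
    rw [h1]
    have h2 : ε + ε * ‖x‖ ^ 2 = ε * (1 + ‖x‖ ^ 2) := by ring
    rw [h2, Real.mul_rpow hε.le (by positivity)]
    ring
  rw [heq] at hscale
  rw [integral_const_mul, smul_eq_mul] at hscale
  have hRn : (Real.sqrt ε) ^ (Module.finrank ℝ (EuclideanSpace ℝ (Fin N))) = ε ^ ((N:ℝ)/2) := by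
    rw [finrank_euclideanSpace_fin, Real.sqrt_eq_rpow, ← Real.rpow_natCast (ε ^ ((1:ℝ)/2)) N,
      ← Real.rpow_mul hε.le]
    congr 1
    ring
  have hc : ε * ε ^ (-(N:ℝ)) = ε ^ (1-(N:ℝ)) := by
    rw [show (1-(N:ℝ)) = 1 + -(N:ℝ) by ring, Real.rpow_add hε, Real.rpow_one]
  rw [hRn, hc] at hscale
  beta_reduce at hscale
  have hpos : (0:ℝ) < ε ^ ((N:ℝ)/2) := Real.rpow_pos_of_pos hε _
  have hgoal : (∫ x : E, ‖x‖ ^ 2 * (ε + ‖x‖ ^ 2) ^ (-(N : ℝ)))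
      = ε ^ ((N:ℝ)/2) * (ε ^ (1-(N:ℝ)) * ∫ y : E, ‖y‖ ^ 2 * (1 + ‖y‖ ^ 2) ^ (-(N : ℝ))) := by
    rw [hscale, ← mul_assoc, mul_inv_cancel₀ hpos.ne', one_mul]
  rw [hgoal, ← mul_assoc, ← Real.rpow_add hε]
  congr 2
  ring

lemma aux_int_eps (hN : 4 ≤ N) (x₀ : E) {ε : ℝ} (hε : 0 < ε) (hε1 : ε ≤ 1) :
    Integrable (fun x : E => ‖x - x₀‖ ^ 2 * (ε + ‖x - x₀‖ ^ 2) ^ (-(N : ℝ))) := by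
  have base : Integrable (fun y : E => ε ^ (-(N:ℝ)) * (‖y‖ ^ 2 * (1 + ‖y‖ ^ 2) ^ (-(N : ℝ)))) :=
    (aux_int_base hN).const_mul _
  have hcont : Continuous fun y : E => ‖y‖ ^ 2 * (ε + ‖y‖ ^ 2) ^ (-(N : ℝ)) := by
    have h1 : Continuous fun y : E => ε + ‖y‖ ^ 2 := by continuity
    exact (continuous_norm.pow 2).mul
      (h1.rpow_const fun y => Or.inl (by positivity))
  have key : Integrable (fun y : E => ‖y‖ ^ 2 * (ε + ‖y‖ ^ 2) ^ (-(N : ℝ))) := by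
    refine base.mono' hcont.aestronglyMeasurable (Eventually.of_forall fun y => ?_)
    have hq : (0:ℝ) < ε + ‖y‖ ^ 2 := by positivity
    have hnn : (0:ℝ) ≤ ‖y‖ ^ 2 * (ε + ‖y‖ ^ 2) ^ (-(N : ℝ)) := by positivity
    rw [Real.norm_eq_abs, abs_of_nonneg hnn]
    have h2 : (ε + ‖y‖ ^ 2) ^ (-(N:ℝ)) ≤ (ε * (1 + ‖y‖ ^ 2)) ^ (-(N:ℝ)) := by
      apply Real.rpow_le_rpow_of_nonpos (by positivity) (by nlinarith) (by simp)
    rw [Real.mul_rpow hε.le (by positivity)] at h2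
    calc ‖y‖ ^ 2 * (ε + ‖y‖ ^ 2) ^ (-(N : ℝ))
        ≤ ‖y‖ ^ 2 * (ε ^ (-(N:ℝ)) * (1 + ‖y‖ ^ 2) ^ (-(N:ℝ))) :=
          mul_le_mul_of_nonneg_left h2 (by positivity)
      _ = ε ^ (-(N:ℝ)) * (‖y‖ ^ 2 * (1 + ‖y‖ ^ 2) ^ (-(N : ℝ))) := by ring
  exact key.comp_sub_right x₀

lemma aux_G_le (hN : 4 ≤ N) (x₀ : E) {ε δ : ℝ} (hε : 0 < ε) (hδ : 0 < δ) {x : E}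
    (hx : δ ≤ ‖x - x₀‖) :
    ‖x - x₀‖ ^ 2 * (ε + ‖x - x₀‖ ^ 2) ^ (-(N : ℝ))
      ≤ ((1 + δ ^ 2) / δ ^ 2) ^ ((N : ℝ) - 1) * (1 + ‖x - x₀‖ ^ 2) ^ (1 - (N : ℝ)) := by
  set r := ‖x - x₀‖ with hr
  have hrpos : 0 < r := hδ.trans_le hx
  have hr2 : (0:ℝ) < r ^ 2 := by positivity
  have hN1 : (0:ℝ) ≤ (N:ℝ) - 1 := by
    have : (4:ℝ) ≤ N := by exact_mod_cast hN
    linarith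
  have hk : (0:ℝ) < (1 + δ ^ 2) / δ ^ 2 := by positivity
  have hq : (0:ℝ) < 1 + r ^ 2 := by positivity
  -- step 1 : (ε + r²)^(-N) ≤ (r²)^(-N)
  have s1 : (ε + r ^ 2) ^ (-(N:ℝ)) ≤ (r ^ 2) ^ (-(N:ℝ)) :=
    Real.rpow_le_rpow_of_nonpos hr2 (by linarith) (by simp)
  -- step 2 : r² * (r²)^(-N) = (r²)^(1-N)
  have s2 : r ^ 2 * (r ^ 2) ^ (-(N:ℝ)) = (r ^ 2) ^ (1 - (N:ℝ)) := by
    rw [show (1 - (N:ℝ)) = 1 + -(N:ℝ) by ring, Real.rpow_add hr2, Real.rpow_one]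
  -- step 3 : (r²)^(1-N) ≤ k^(N-1) * (1+r²)^(1-N)
  have hbase : 1 + r ^ 2 ≤ ((1 + δ ^ 2) / δ ^ 2) * r ^ 2 := by
    have h1 : δ ^ 2 ≤ r ^ 2 := by nlinarith
    rw [div_mul_eq_mul_div, le_div_iff₀ (by positivity)]
    nlinarith
  have s3 : (r ^ 2) ^ (1 - (N:ℝ))
      ≤ ((1 + δ ^ 2) / δ ^ 2) ^ ((N : ℝ) - 1) * (1 + r ^ 2) ^ (1 - (N:ℝ)) := by
    have h1 : (1 + r ^ 2) ^ ((N:ℝ) - 1) ≤ (((1 + δ ^ 2) / δ ^ 2) * r ^ 2) ^ ((N:ℝ) - 1) :=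
      Real.rpow_le_rpow hq.le hbase hN1
    rw [Real.mul_rpow hk.le hr2.le] at h1
    have e₁ : (r ^ 2) ^ (1 - (N:ℝ)) = ((r ^ 2) ^ ((N:ℝ) - 1))⁻¹ := by
      rw [show (1 - (N:ℝ)) = -((N:ℝ) - 1) by ring, Real.rpow_neg hr2.le]
    have e₂ : (1 + r ^ 2) ^ (1 - (N:ℝ)) = ((1 + r ^ 2) ^ ((N:ℝ) - 1))⁻¹ := by
      rw [show (1 - (N:ℝ)) = -((N:ℝ) - 1) by ring, Real.rpow_neg hq.le]
    rw [e₁, e₂]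
    have hx1 : (0:ℝ) < (r ^ 2) ^ ((N:ℝ) - 1) := Real.rpow_pos_of_pos hr2 _
    have hx2 : (0:ℝ) < (1 + r ^ 2) ^ ((N:ℝ) - 1) := Real.rpow_pos_of_pos hq _
    rw [inv_eq_one_div, inv_eq_one_div, mul_one_div, div_le_div_iff₀ hx1 hx2]
    nlinarith [Real.rpow_pos_of_pos hk ((N:ℝ) - 1)]
  calc r ^ 2 * (ε + r ^ 2) ^ (-(N:ℝ)) ≤ r ^ 2 * (r ^ 2) ^ (-(N:ℝ)) :=
        mul_le_mul_of_nonneg_left s1 (by positivity)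
    _ = (r ^ 2) ^ (1 - (N:ℝ)) := s2
    _ ≤ _ := s3

lemma aux_Vsq_le (hN : 4 ≤ N) (x₀ : E) {ε δ : ℝ} (hε : 0 < ε) (hδ : 0 < δ) {x : E}
    (hx : δ ≤ ‖x - x₀‖) :
    (ε ^ (((N : ℝ) - 2) / 4) / (ε + ‖x - x₀‖ ^ 2) ^ (((N : ℝ) - 2) / 2)) ^ 2
      ≤ ε ^ (((N : ℝ) - 2) / 2) * (δ ^ 2) ^ (2 - (N : ℝ)) := by
  set r := ‖x - x₀‖ with hr
  have hrpos : 0 < r := hδ.trans_le hx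
  have hq : (0:ℝ) < ε + r ^ 2 := by positivity
  have hN2 : (0:ℝ) ≤ (N:ℝ) - 2 := by
    have : (4:ℝ) ≤ N := by exact_mod_cast hN
    linarith
  have e1 : (ε ^ (((N : ℝ) - 2) / 4)) ^ (2:ℕ) = ε ^ (((N : ℝ) - 2) / 2) := by
    rw [← Real.rpow_natCast (ε ^ (((N : ℝ) - 2) / 4)) 2, ← Real.rpow_mul hε.le]
    congr 1
    push_cast
    ring
  have e2 : ((ε + r ^ 2) ^ (((N : ℝ) - 2) / 2)) ^ (2:ℕ) = (ε + r ^ 2) ^ ((N:ℝ) - 2) := by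
    rw [← Real.rpow_natCast ((ε + r ^ 2) ^ (((N : ℝ) - 2) / 2)) 2, ← Real.rpow_mul hq.le]
    congr 1
    push_cast
    ring
  rw [div_pow, e1, e2]
  have hd : (0:ℝ) < (δ ^ 2) ^ ((N:ℝ) - 2) := Real.rpow_pos_of_pos (by positivity) _
  have hqd : (δ ^ 2) ^ ((N:ℝ) - 2) ≤ (ε + r ^ 2) ^ ((N:ℝ) - 2) :=
    Real.rpow_le_rpow (by positivity) (by nlinarith) hN2
  have e3 : (δ ^ 2) ^ (2 - (N:ℝ)) = ((δ ^ 2) ^ ((N:ℝ) - 2))⁻¹ := by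
    rw [show (2 - (N:ℝ)) = -((N:ℝ) - 2) by ring, Real.rpow_neg (by positivity)]
  rw [e3, div_le_iff₀ (by positivity)]
  have hεp : (0:ℝ) ≤ ε ^ (((N : ℝ) - 2) / 2) := Real.rpow_nonneg hε.le _
  calc ε ^ (((N : ℝ) - 2) / 2) = ε ^ (((N : ℝ) - 2) / 2) * (((δ ^ 2) ^ ((N:ℝ) - 2))⁻¹ *
        (δ ^ 2) ^ ((N:ℝ) - 2)) := by rw [inv_mul_cancel₀ hd.ne', mul_one]
    _ ≤ ε ^ (((N : ℝ) - 2) / 2) * (((δ ^ 2) ^ ((N:ℝ) - 2))⁻¹ * (ε + r ^ 2) ^ ((N:ℝ) - 2)) := by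
        apply mul_le_mul_of_nonneg_left _ hεp
        exact mul_le_mul_of_nonneg_left hqd (by positivity)
    _ = ε ^ (((N : ℝ) - 2) / 2) * ((δ ^ 2) ^ ((N:ℝ) - 2))⁻¹ * (ε + r ^ 2) ^ ((N:ℝ) - 2) := by
        ring

set_option maxHeartbeats 2000000 in
lemma aux_key (hN : 4 ≤ N) (x₀ : E) (ζ : E → ℝ)
    (hζsm : ContDiff ℝ (⊤ : ℕ∞) ζ) (hζcs : HasCompactSupport ζ)
    (hζ01 : ∀ x, 0 ≤ ζ x ∧ ζ x ≤ 1)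
    {δ : ℝ} (hδ : 0 < δ) (hball : ∀ y : E, ‖y - x₀‖ < δ → ζ y = 1)
    {M : ℝ} (hM : ∀ x, ‖fderiv ℝ ζ x‖ ≤ M)
    {ε : ℝ} (hε : 0 < ε) (hε1 : ε ≤ 1)
    (V : E → ℝ)
    (hV : V = fun x : E => ε ^ (((N : ℝ) - 2) / 4) / (ε + ‖x - x₀‖ ^ 2) ^ (((N : ℝ) - 2) / 2))
    (U : E → ℝ) (hU : ∀ x, U x = ζ x * V x) :
    |(∫ x : E, ‖fderiv ℝ U x‖ ^ 2)
        - ((N : ℝ) - 2) ^ 2 * ∫ y : E, ‖y‖ ^ 2 * (1 + ‖y‖ ^ 2) ^ (-(N : ℝ))|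
      ≤ (3 * ((N:ℝ)-2)^2 * ((1+δ^2)/δ^2)^((N:ℝ)-1) *
            (∫ x : E, (1 + ‖x - x₀‖ ^ 2) ^ (1 - (N : ℝ)))
          + 2 * M^2 * (δ^2)^(2-(N:ℝ)) * (volume (tsupport (fderiv ℝ ζ))).toReal)
        * ε ^ (((N : ℝ) - 2) / 2) := by
  have hUeq : U = fun y : E => ζ y * V y := funext hU
  rw [hUeq]
  set S : Set (EuclideanSpace ℝ (Fin N)) := tsupport (fderiv ℝ ζ) with hS
  set A : ℝ := 3 * ((N:ℝ)-2)^2 * ((1+δ^2)/δ^2)^((N:ℝ)-1) with hA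
  set B : ℝ := 2 * M^2 * (δ^2)^(2-(N:ℝ)) with hB
  clear_value S A B
  have hM0 : 0 ≤ M := le_trans (norm_nonneg _) (hM x₀)
  have hA0 : 0 ≤ A := by rw [hA]; positivity
  have hB0 : 0 ≤ B := by rw [hB]; positivity
  have hζd : Differentiable ℝ ζ := hζsm.differentiable (by simp)
  have hq0 : ∀ x : E, ε + ‖x - x₀‖ ^ 2 ≠ 0 := fun x => by positivity
  have hVd : ∀ x, DifferentiableAt ℝ V x := by
    rw [hV]; exact fun x => (aux_deriv x₀ hε x).differentiableAt
  have hVnn : ∀ x, 0 ≤ V x := by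
    rw [hV]; intro x; positivity
  have hGeq : ∀ x, ‖fderiv ℝ V x‖ ^ 2 = ((N : ℝ) - 2) ^ 2 * ε ^ (((N : ℝ) - 2) / 2) *
      (‖x - x₀‖ ^ 2 * (ε + ‖x - x₀‖ ^ 2) ^ (-(N : ℝ))) := by
    rw [hV]; exact fun x => aux_normsq x₀ hε x
  have hVsq : ∀ x : E, δ ≤ ‖x - x₀‖ →
      V x ^ 2 ≤ ε ^ (((N : ℝ) - 2) / 2) * (δ^2) ^ (2 - (N:ℝ)) := by
    rw [hV]; exact fun x hx => aux_Vsq_le hN x₀ hε hδ hx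
  -- smoothness of V
  have hVc : ContDiff ℝ 1 V := by
    have hVeq : V = fun x : E =>
        ε ^ (((N : ℝ) - 2) / 4) * (ε + ‖x - x₀‖ ^ 2) ^ (-(((N : ℝ) - 2) / 2)) := by
      rw [hV]
      funext y
      rw [Real.rpow_neg (by positivity), div_eq_mul_inv]
    rw [hVeq]
    apply ContDiff.mul contDiff_const
    apply ContDiff.rpow_const_of_ne _ hq0
    exact contDiff_const.add ((contDiff_id.sub contDiff_const).norm_sq ℝ)
  have hUc : ContDiff ℝ 1 (fun y : E => ζ y * V y) := (hζsm.of_le (by simp)).mul hVc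
  have hUcs : HasCompactSupport (fun y : E => ζ y * V y) := hζcs.mul_right
  have hfd : ∀ x, fderiv ℝ (fun y : E => ζ y * V y) x
      = ζ x • fderiv ℝ V x + V x • fderiv ℝ ζ x :=
    fun x => fderiv_mul (hζd x) (hVd x)
  -- integrability of F
  have hFcont : Continuous fun x : E => ‖fderiv ℝ (fun y : E => ζ y * V y) x‖ ^ 2 :=
    ((hUc.continuous_fderiv (by simp)).norm).pow 2
  have hFcs : HasCompactSupport fun x : E => ‖fderiv ℝ (fun y : E => ζ y * V y) x‖ ^ 2 := by
    have := (hUcs.fderiv (𝕜 := ℝ)).comp_left (g := fun L : (EuclideanSpace ℝ (Fin N)) →L[ℝ] ℝ => ‖L‖ ^ 2) (by simp)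
    exact this
  have hF : Integrable (fun x : E => ‖fderiv ℝ (fun y : E => ζ y * V y) x‖ ^ 2) :=
    hFcont.integrable_of_hasCompactSupport hFcs
  -- integrability and value of G
  have hGfun : (fun x : E => ‖fderiv ℝ V x‖ ^ 2) = fun x : E =>
      ((N : ℝ) - 2) ^ 2 * ε ^ (((N : ℝ) - 2) / 2) *
        (‖x - x₀‖ ^ 2 * (ε + ‖x - x₀‖ ^ 2) ^ (-(N : ℝ))) := funext hGeq
  have hG : Integrable (fun x : E => ‖fderiv ℝ V x‖ ^ 2) := by
    rw [hGfun]; exact (aux_int_eps hN x₀ hε hε1).const_mul _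
  have hGval : ∫ x : E, ‖fderiv ℝ V x‖ ^ 2
      = ((N : ℝ) - 2) ^ 2 * ∫ y : E, ‖y‖ ^ 2 * (1 + ‖y‖ ^ 2) ^ (-(N : ℝ)) := by
    rw [hGfun, integral_const_mul, aux_integral hN x₀ hε]
    have hcan : ε ^ (((N:ℝ)-2)/2) * ε ^ (1 - (N:ℝ)/2) = 1 := by
      rw [← Real.rpow_add hε, show (((N:ℝ)-2)/2 + (1 - (N:ℝ)/2)) = (0:ℝ) by ring,
        Real.rpow_zero]
    linear_combination ((N:ℝ)-2)^2 * (∫ y : E, ‖y‖ ^ 2 * (1 + ‖y‖ ^ 2) ^ (-(N : ℝ))) * hcan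
  -- pointwise bound
  have hpoint : ∀ x : E, |‖fderiv ℝ (fun y : E => ζ y * V y) x‖ ^ 2 - ‖fderiv ℝ V x‖ ^ 2|
      ≤ ε ^ (((N : ℝ) - 2) / 2) *
        (A * (1 + ‖x - x₀‖ ^ 2) ^ (1 - (N : ℝ)) + B * S.indicator (fun _ => (1:ℝ)) x) := by
    intro x
    have hind0 : 0 ≤ S.indicator (fun _ => (1:ℝ)) x :=
      Set.indicator_nonneg (fun _ _ => zero_le_one) x
    have hε2 : (0:ℝ) ≤ ε ^ (((N : ℝ) - 2) / 2) := Real.rpow_nonneg hε.le _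
    have hsn : (0:ℝ) ≤ (1 + ‖x - x₀‖ ^ 2) ^ (1 - (N : ℝ)) :=
      Real.rpow_nonneg (by positivity) _
    by_cases hx : ‖x - x₀‖ < δ
    · have hUV : fderiv ℝ (fun y : E => ζ y * V y) x = fderiv ℝ V x := by
        apply Filter.EventuallyEq.fderiv_eq
        have hmem : Metric.ball x₀ δ ∈ 𝓝 x := by
          apply Metric.isOpen_ball.mem_nhds
          rw [Metric.mem_ball, dist_eq_norm]
          exact hx
        filter_upwards [hmem] with y hy
        rw [hball y (by rwa [Metric.mem_ball, dist_eq_norm] at hy), one_mul]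
      rw [hUV, sub_self, abs_zero]
      positivity
    · push_neg at hx
      have hF0' : (0:ℝ) ≤ ‖fderiv ℝ (fun y : E => ζ y * V y) x‖ ^ 2 := by positivity
      have hG0' : (0:ℝ) ≤ ‖fderiv ℝ V x‖ ^ 2 := by positivity
      have ha0 : (0:ℝ) ≤ ‖fderiv ℝ V x‖ := norm_nonneg _
      obtain ⟨F, hFdef⟩ : ∃ F : ℝ, ‖fderiv ℝ (fun y : E => ζ y * V y) x‖ ^ 2 = F := ⟨_, rfl⟩
      obtain ⟨a, hadef⟩ : ∃ a : ℝ, ‖fderiv ℝ V x‖ = a := ⟨_, rfl⟩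
      have hGdef : ‖fderiv ℝ V x‖ ^ 2 = a ^ 2 := by rw [hadef]
      rw [hFdef, hGdef]
      set G := a ^ 2 with hGa
      have hF0 : (0:ℝ) ≤ F := hFdef ▸ hF0'
      have hG0 : (0:ℝ) ≤ G := hGdef ▸ hG0'
      have ha : (0:ℝ) ≤ a := hadef ▸ ha0
      have hGb : G ≤ ((N : ℝ) - 2) ^ 2 * ε ^ (((N : ℝ) - 2) / 2) *
          (((1 + δ ^ 2) / δ ^ 2) ^ ((N : ℝ) - 1) * (1 + ‖x - x₀‖ ^ 2) ^ (1 - (N : ℝ))) := by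
        rw [← hGdef, hGeq x]
        exact mul_le_mul_of_nonneg_left (aux_G_le hN x₀ hε hδ hx) (by positivity)
      have hFb : F ≤ 2 * G + B * ε ^ (((N : ℝ) - 2) / 2) * S.indicator (fun _ => (1:ℝ)) x := by
        by_cases hxS : x ∈ S
        · rw [Set.indicator_of_mem hxS]
          have hnb : ‖fderiv ℝ (fun y : E => ζ y * V y) x‖
              ≤ a + V x * M := by
            rw [← hadef, hfd x]
            refine (norm_add_le _ _).trans ?_
            rw [norm_smul, norm_smul, Real.norm_eq_abs, Real.norm_eq_abs]
            have h1 : |ζ x| ≤ 1 := abs_le.mpr ⟨by linarith [(hζ01 x).1], (hζ01 x).2⟩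
            have h2 : |V x| = V x := abs_of_nonneg (hVnn x)
            have h3 : ‖fderiv ℝ ζ x‖ ≤ M := hM x
            nlinarith [norm_nonneg (fderiv ℝ ζ x), norm_nonneg (fderiv ℝ V x), hVnn x,
              abs_nonneg (ζ x)]
          have hsq : F ≤ (a + V x * M) ^ 2 := by
            rw [← hFdef]
            exact pow_le_pow_left₀ (norm_nonneg _) hnb 2
          have hVsqx := hVsq x hx
          have h2VM : (V x * M) ^ 2 ≤ ε ^ (((N : ℝ) - 2) / 2) * (δ^2) ^ (2 - (N:ℝ)) * M ^ 2 := by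
            have h5 := mul_le_mul_of_nonneg_right hVsqx (sq_nonneg M)
            calc (V x * M) ^ 2 = V x ^ 2 * M ^ 2 := by ring
              _ ≤ _ := h5
          have hab : (a + V x * M) ^ 2
              ≤ 2 * a ^ 2 + 2 * (V x * M) ^ 2 := by
            nlinarith [sq_nonneg (a - V x * M)]
          have step : F ≤ 2 * G + 2 * (ε ^ (((N : ℝ) - 2) / 2) * (δ^2) ^ (2 - (N:ℝ)) * M ^ 2) := by
            rw [hGa]
            calc F ≤ (a + V x * M) ^ 2 := hsq
              _ ≤ 2 * a ^ 2 + 2 * (V x * M) ^ 2 := hab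
              _ ≤ _ := by nlinarith [h2VM]
          have hBr : B * ε ^ (((N : ℝ) - 2) / 2) * 1
              = 2 * (ε ^ (((N : ℝ) - 2) / 2) * (δ^2) ^ (2 - (N:ℝ)) * M ^ 2) := by
            rw [hB]; ring
          rw [hBr]
          exact step
        · rw [Set.indicator_of_notMem hxS, mul_zero, add_zero]
          have hz : fderiv ℝ ζ x = 0 := image_eq_zero_of_notMem_tsupport (hS ▸ hxS)
          have hUV : fderiv ℝ (fun y : E => ζ y * V y) x = ζ x • fderiv ℝ V x := by
            rw [hfd x, hz, smul_zero, add_zero]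
          have hnb : ‖fderiv ℝ (fun y : E => ζ y * V y) x‖ ≤ a := by
            rw [← hadef, hUV, norm_smul, Real.norm_eq_abs]
            have h1 : |ζ x| ≤ 1 := abs_le.mpr ⟨by linarith [(hζ01 x).1], (hζ01 x).2⟩
            nlinarith [norm_nonneg (fderiv ℝ V x), abs_nonneg (ζ x)]
          have hFG : F ≤ G := by
            rw [← hFdef, hGa]
            exact pow_le_pow_left₀ (norm_nonneg _) hnb 2
          linarith
      have hGb2 : 3 * G ≤ A * (ε ^ (((N : ℝ) - 2) / 2) * (1 + ‖x - x₀‖ ^ 2) ^ (1 - (N : ℝ))) := by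
        rw [hA]
        nlinarith [hGb]
      have hAnn : (0:ℝ) ≤ A * (ε ^ (((N : ℝ) - 2) / 2) * (1 + ‖x - x₀‖ ^ 2) ^ (1 - (N : ℝ))) := by
        have : (0:ℝ) ≤ (1 + ‖x - x₀‖ ^ 2) ^ (1 - (N : ℝ)) := Real.rpow_nonneg (by positivity) _
        have hε2 : (0:ℝ) ≤ ε ^ (((N : ℝ) - 2) / 2) := Real.rpow_nonneg hε.le _
        positivity
      have hBnn : (0:ℝ) ≤ B * (ε ^ (((N : ℝ) - 2) / 2) * S.indicator (fun _ => (1:ℝ)) x) := by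
        have hε2 : (0:ℝ) ≤ ε ^ (((N : ℝ) - 2) / 2) := Real.rpow_nonneg hε.le _
        positivity
      rw [abs_le]
      constructor
      · nlinarith [hFb, hGb2, hG0, hAnn, hBnn]
      · nlinarith [hFb, hGb2, hG0, hF0, hAnn, hBnn]
  -- assembling
  have hSmeas : MeasurableSet S := by rw [hS]; exact (isClosed_tsupport _).measurableSet
  have hScomp : IsCompact S := by rw [hS]; exact hζcs.fderiv (𝕜 := ℝ)
  have hSfin : volume S < ⊤ := hScomp.measure_lt_top
  have hind : Integrable (S.indicator fun _ => (1:ℝ)) := by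
    rw [integrable_indicator_iff hSmeas]
    exact (integrableOn_const_iff (by simp)).mpr (Or.inr hSfin)
  have hh : Integrable (fun x : E =>
      A * (1 + ‖x - x₀‖ ^ 2) ^ (1 - (N : ℝ)) + B * S.indicator (fun _ => (1:ℝ)) x) :=
    ((aux_int_shift hN x₀).const_mul A).add (hind.const_mul B)
  have hsplit : (∫ x : E, ‖fderiv ℝ (fun y : E => ζ y * V y) x‖ ^ 2)
      - ((N : ℝ) - 2) ^ 2 * (∫ y : E, ‖y‖ ^ 2 * (1 + ‖y‖ ^ 2) ^ (-(N : ℝ)))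
      = ∫ x : E, (‖fderiv ℝ (fun y : E => ζ y * V y) x‖ ^ 2 - ‖fderiv ℝ V x‖ ^ 2) := by
    rw [integral_sub hF hG, hGval]
  rw [hsplit]
  have habs : |∫ x : E, (‖fderiv ℝ (fun y : E => ζ y * V y) x‖ ^ 2 - ‖fderiv ℝ V x‖ ^ 2)|
      ≤ ∫ x : E, |‖fderiv ℝ (fun y : E => ζ y * V y) x‖ ^ 2 - ‖fderiv ℝ V x‖ ^ 2| := by
    simpa [Real.norm_eq_abs] using
      norm_integral_le_integral_norm
        (fun x : E => ‖fderiv ℝ (fun y : E => ζ y * V y) x‖ ^ 2 - ‖fderiv ℝ V x‖ ^ 2)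
  refine habs.trans ?_
  have hmono : ∫ x : E, |‖fderiv ℝ (fun y : E => ζ y * V y) x‖ ^ 2 - ‖fderiv ℝ V x‖ ^ 2|
      ≤ ∫ x : E, ε ^ (((N : ℝ) - 2) / 2) *
        (A * (1 + ‖x - x₀‖ ^ 2) ^ (1 - (N : ℝ)) + B * S.indicator (fun _ => (1:ℝ)) x) :=
    integral_mono (hF.sub hG).abs (hh.const_mul _) hpoint
  refine hmono.trans ?_
  rw [integral_const_mul, integral_add ((aux_int_shift hN x₀).const_mul A) (hind.const_mul B),
    integral_const_mul, integral_const_mul, integral_indicator_const _ hSmeas]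
  rw [smul_eq_mul, mul_one]
  exact le_of_eq (by rw [measureReal_def]; ring)

theorem stmt_8
    (N : ℕ) (hN : 4 ≤ N)
    (Ω : Set (EuclideanSpace ℝ (Fin N)))
    (hΩo : IsOpen Ω) (hΩb : Bornology.IsBounded Ω) (hΩne : Ω.Nonempty)
    (x₀ : EuclideanSpace ℝ (Fin N)) (hx₀ : x₀ ∈ Ω)
    (ζ : EuclideanSpace ℝ (Fin N) → ℝ)
    (hζsm : ContDiff ℝ (⊤ : ℕ∞) ζ) (hζcs : HasCompactSupport ζ) (hζΩ : tsupport ζ ⊆ Ω)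
    (hζ01 : ∀ x, 0 ≤ ζ x ∧ ζ x ≤ 1)
    (hζ1 : ∀ᶠ x in 𝓝 x₀, ζ x = 1)
    (u : ℝ → EuclideanSpace ℝ (Fin N) → ℝ)
    (hu : ∀ ε : ℝ, ∀ x, u ε x =
      ζ x * (ε ^ (((N : ℝ) - 2) / 4) / (ε + ‖x - x₀‖ ^ 2) ^ (((N : ℝ) - 2) / 2)))
    (K₁ : ℝ)
    (hK₁ : K₁ = ((N : ℝ) - 2) ^ 2 *
      ∫ y : EuclideanSpace ℝ (Fin N), ‖y‖ ^ 2 * (1 + ‖y‖ ^ 2) ^ (-(N : ℝ)))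
    :
    (fun ε : ℝ => (∫ x : EuclideanSpace ℝ (Fin N), ‖fderiv ℝ (u ε) x‖ ^ 2) - K₁)
      =O[𝓝[>] (0 : ℝ)] fun ε : ℝ => ε ^ (((N : ℝ) - 2) / 2) := by
  obtain ⟨δ, hδpos, hball⟩ := Metric.eventually_nhds_iff.mp hζ1
  have hball' : ∀ y : EuclideanSpace ℝ (Fin N), ‖y - x₀‖ < δ → ζ y = 1 := fun y hy =>
    hball (by rwa [dist_eq_norm])
  obtain ⟨z, hz⟩ := ((hζsm.continuous_fderiv (by simp)).norm).exists_forall_ge_of_hasCompactSupport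
    ((hζcs.fderiv (𝕜 := ℝ)).norm)
  rw [isBigO_iff]
  refine ⟨3 * ((N:ℝ)-2)^2 * ((1+δ^2)/δ^2)^((N:ℝ)-1) *
      (∫ x : EuclideanSpace ℝ (Fin N), (1 + ‖x - x₀‖ ^ 2) ^ (1 - (N : ℝ)))
    + 2 * ‖fderiv ℝ ζ z‖^2 * (δ^2)^(2-(N:ℝ)) *
      (volume (tsupport (fderiv ℝ ζ))).toReal, ?_⟩
  filter_upwards [Ioo_mem_nhdsGT_of_mem (Set.left_mem_Ico.mpr zero_lt_one)] with ε hε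
  obtain ⟨hε0, hε1⟩ := hε
  rw [hK₁, Real.norm_eq_abs, Real.norm_eq_abs, abs_of_nonneg (Real.rpow_nonneg hε0.le _)]
  exact aux_key hN x₀ ζ hζsm hζcs hζ01 hδpos hball' hz hε0 hε1.le _ rfl (u ε) (hu ε)
end
end

section
/- Let N ≥ 4 be an integer, Ω ⊂ ℝ^N a nonempty bounded open set, x₀ ∈ Ω, ζ a smooth function compactly supported in Ω with 0 ≤ ζ ≤ 1 and ζ ≡ 1 on a neighborhood of x₀, and q = 2N/(N−2). Then, as ε → 0⁺, (∫_{ℝ^N} |u_{x₀,ε}(x)|^q dx)^{2/q} = K₂ + O(ε^{(N−2)/2}). -/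
open MeasureTheory Real Filter Topology Asymptotics
open scoped NNReal

noncomputable section

lemma aux_rpow_add_le (a b p : ℝ) (ha : 0 ≤ a) (hb : 0 ≤ b) (hp : 0 ≤ p) (hp1 : p ≤ 1) :
    (a + b) ^ p ≤ a ^ p + b ^ p := by
  lift a to ℝ≥0 using ha
  lift b to ℝ≥0 using hb
  exact_mod_cast NNReal.rpow_add_le_add_rpow a b hp hp1

set_option maxHeartbeats 1000000 in
theorem stmt_9
    (N : ℕ) (hN : 4 ≤ N)
    (Ω : Set (EuclideanSpace ℝ (Fin N)))
    (hΩo : IsOpen Ω) (hΩb : Bornology.IsBounded Ω) (hΩne : Ω.Nonempty)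
    (x₀ : EuclideanSpace ℝ (Fin N)) (hx₀ : x₀ ∈ Ω)
    (ζ : EuclideanSpace ℝ (Fin N) → ℝ)
    (hζsm : ContDiff ℝ (⊤ : ℕ∞) ζ) (hζcs : HasCompactSupport ζ) (hζΩ : tsupport ζ ⊆ Ω)
    (hζ01 : ∀ x, 0 ≤ ζ x ∧ ζ x ≤ 1)
    (hζ1 : ∀ᶠ x in 𝓝 x₀, ζ x = 1)
    (u : ℝ → EuclideanSpace ℝ (Fin N) → ℝ)
    (hu : ∀ ε : ℝ, ∀ x, u ε x =
      ζ x * (ε ^ (((N : ℝ) - 2) / 4) / (ε + ‖x - x₀‖ ^ 2) ^ (((N : ℝ) - 2) / 2)))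
    (q : ℝ) (hq : q = 2 * (N : ℝ) / ((N : ℝ) - 2))
    (K₂ : ℝ)
    (hK₂ : K₂ = (∫ y : EuclideanSpace ℝ (Fin N), (1 + ‖y‖ ^ 2) ^ (-(N : ℝ)))
      ^ (((N : ℝ) - 2) / (N : ℝ)))
    :
    (fun ε : ℝ =>
        (∫ x : EuclideanSpace ℝ (Fin N), |u ε x| ^ q) ^ (2 / q) - K₂)
      =O[𝓝[>] (0 : ℝ)] fun ε : ℝ => ε ^ (((N : ℝ) - 2) / 2) := by
  have hN4 : (4 : ℝ) ≤ (N : ℝ) := by exact_mod_cast hN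
  have hN0 : (0 : ℝ) < (N : ℝ) := by linarith
  have hN2 : (0 : ℝ) < (N : ℝ) - 2 := by linarith
  have hq0 : 0 < q := by rw [hq]; positivity
  set θ : ℝ := ((N : ℝ) - 2) / (N : ℝ) with hθdef
  have hθ : 2 / q = θ := by rw [hq, hθdef]; field_simp
  have hθ0 : 0 < θ := div_pos hN2 hN0
  have hθ1 : θ ≤ 1 := by rw [hθdef, div_le_one hN0]; linarith
  -- the limiting profile g and its integral A
  set g : EuclideanSpace ℝ (Fin N) → ℝ := fun y => (1 + ‖y‖ ^ 2) ^ (-(N : ℝ)) with hgdef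
  have hg_nonneg : ∀ y, 0 ≤ g y := fun y => rpow_nonneg (by positivity) _
  have hg_int : Integrable g := by
    have h2 : (Module.finrank ℝ (EuclideanSpace ℝ (Fin N)) : ℝ) < 2 * N := by
      have : (1 : ℝ) ≤ (N : ℝ) := by linarith
      simp only [finrank_euclideanSpace, Fintype.card_fin]
      nlinarith
    have := integrable_rpow_neg_one_add_norm_sq (E := EuclideanSpace ℝ (Fin N))
      (μ := volume) h2
    convert this using 2 with x
    ring_nf
    rfl
  set A : ℝ := ∫ y, g y with hAdef
  have hA0 : 0 ≤ A := integral_nonneg hg_nonneg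
  have hK₂' : K₂ = A ^ θ := hK₂
  -- the cutoff is 1 on a ball of radius δ
  obtain ⟨δ, hδ0, hδ⟩ := Metric.eventually_nhds_iff.mp hζ1
  set C : ℝ := ((1 + δ ^ 2) / δ ^ 2) ^ (N : ℝ) with hCdef
  have hC0 : 0 < C := rpow_pos_of_pos (by positivity) _
  rw [Asymptotics.isBigO_iff]
  refine ⟨(C * A) ^ θ, ?_⟩
  have hmem : Set.Ioo (0 : ℝ) 1 ∈ 𝓝[>] (0 : ℝ) :=
    Ioo_mem_nhdsGT_of_mem ⟨le_refl 0, one_pos⟩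
  filter_upwards [hmem] with ε hεmem
  obtain ⟨hε0, hε1⟩ := hεmem
  -- the rescaled bubble f
  set f : EuclideanSpace ℝ (Fin N) → ℝ :=
    fun z => ε ^ ((N : ℝ) / 2) * (ε + ‖z‖ ^ 2) ^ (-(N : ℝ)) with hfdef
  set w : EuclideanSpace ℝ (Fin N) → ℝ := fun x => ζ x ^ q with hwdef
  have hw01 : ∀ x, 0 ≤ w x ∧ w x ≤ 1 := fun x =>
    ⟨rpow_nonneg (hζ01 x).1 _, rpow_le_one (hζ01 x).1 (hζ01 x).2 hq0.le⟩
  have hpos : ∀ z : EuclideanSpace ℝ (Fin N), (0 : ℝ) < ε + ‖z‖ ^ 2 := fun z => by positivity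
  have hf_nonneg : ∀ z, 0 ≤ f z := fun z =>
    mul_nonneg (rpow_nonneg hε0.le _) (rpow_nonneg (hpos z).le _)
  -- Step 1: pointwise identity for |u ε x| ^ q
  have step1 : ∀ x, |u ε x| ^ q = w x * f (x - x₀) := by
    intro x
    have h1 : (0 : ℝ) < ε + ‖x - x₀‖ ^ 2 := hpos _
    have habs : |u ε x| = ζ x *
        (ε ^ (((N : ℝ) - 2) / 4) / (ε + ‖x - x₀‖ ^ 2) ^ (((N : ℝ) - 2) / 2)) := by
      rw [hu]
      exact abs_of_nonneg (mul_nonneg (hζ01 x).1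
        (div_nonneg (rpow_nonneg hε0.le _) (rpow_nonneg h1.le _)))
    rw [habs, Real.mul_rpow (hζ01 x).1
        (div_nonneg (rpow_nonneg hε0.le _) (rpow_nonneg h1.le _)),
      Real.div_rpow (rpow_nonneg hε0.le _) (rpow_nonneg h1.le _),
      ← Real.rpow_mul hε0.le, ← Real.rpow_mul h1.le]
    have e1 : ((N : ℝ) - 2) / 4 * q = (N : ℝ) / 2 := by rw [hq]; field_simp; ring
    have e2 : ((N : ℝ) - 2) / 2 * q = (N : ℝ) := by rw [hq]; field_simp
    rw [e1, e2, div_eq_mul_inv, ← Real.rpow_neg h1.le]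
  -- Step 2: change of variables to compute ∫ f
  have hrtε : (0 : ℝ) < Real.sqrt ε := Real.sqrt_pos.mpr hε0
  have hcomp : ∀ y, f (Real.sqrt ε • y) = ε ^ (-(N : ℝ) / 2) * g y := by
    intro y
    have hn : ‖Real.sqrt ε • y‖ ^ 2 = ε * ‖y‖ ^ 2 := by
      rw [norm_smul, Real.norm_eq_abs, abs_of_nonneg (Real.sqrt_nonneg ε), mul_pow,
        Real.sq_sqrt hε0.le]
    simp only [hfdef, hgdef, hn]
    rw [show ε + ε * ‖y‖ ^ 2 = ε * (1 + ‖y‖ ^ 2) by ring,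
      Real.mul_rpow hε0.le (by positivity), ← mul_assoc, ← Real.rpow_add hε0,
      show (N : ℝ) / 2 + -(N : ℝ) = -(N : ℝ) / 2 by ring]
  have hfg_int : Integrable (fun y => f (Real.sqrt ε • y)) := by
    rw [funext hcomp]
    exact hg_int.const_mul _
  have hf_int : Integrable f := (integrable_comp_smul_iff volume f hrtε.ne').mp hfg_int
  have hkey : (∫ z, f z) = A := by
    have h1 := Measure.integral_comp_smul volume f (Real.sqrt ε)
    simp only [hcomp] at h1
    rw [integral_const_mul] at h1
    rw [show Module.finrank ℝ (EuclideanSpace ℝ (Fin N)) = N by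
      simp [finrank_euclideanSpace]] at h1
    have hsq : (Real.sqrt ε ^ N : ℝ) = ε ^ ((N : ℝ) / 2) := by
      rw [← Real.rpow_natCast (Real.sqrt ε) N, Real.sqrt_eq_rpow,
        ← Real.rpow_mul hε0.le]
      congr 1
      ring
    have h2 : |((Real.sqrt ε ^ N : ℝ))⁻¹| = ε ^ (-(N : ℝ) / 2) := by
      rw [hsq, abs_of_pos (by positivity), ← Real.rpow_neg hε0.le]
      congr 1
      ring
    rw [h2, smul_eq_mul] at h1
    have hne : ε ^ (-(N : ℝ) / 2) ≠ 0 := by positivity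
    exact (mul_left_cancel₀ hne h1).symm
  -- Step 3: integrability and reduction of the integral
  simp only [step1]
  have htrans : Integrable (fun x => f (x - x₀)) := hf_int.comp_sub_right x₀
  have hw_cont : Continuous w := hζsm.continuous.rpow_const fun x => Or.inr hq0.le
  have hI_int : Integrable (fun x => w x * f (x - x₀)) :=
    htrans.bdd_mul hw_cont.aestronglyMeasurable
      (c := 1) (Filter.Eventually.of_forall fun x => by rw [Real.norm_eq_abs, abs_of_nonneg (hw01 x).1]; exact (hw01 x).2)
  set I : ℝ := ∫ x, w x * f (x - x₀) with hIdef
  have hAtrans : (∫ x, f (x - x₀)) = A := by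
    rw [integral_sub_right_eq_self f x₀]; exact hkey
  have hgtrans : Integrable (fun x => g (x - x₀)) := hg_int.comp_sub_right x₀
  have hAg : (∫ x, g (x - x₀)) = A := integral_sub_right_eq_self g x₀
  -- Step 4: pointwise bound on the error
  have hpw : ∀ x, (1 - w x) * f (x - x₀) ≤ ε ^ ((N : ℝ) / 2) * (C * g (x - x₀)) := by
    intro x
    by_cases hx : dist x x₀ < δ
    · have hw1 : w x = 1 := by rw [hwdef]; simp only [hδ hx, Real.one_rpow]
      rw [hw1]
      simp only [sub_self, zero_mul]
      exact mul_nonneg (rpow_nonneg hε0.le _) (mul_nonneg hC0.le (hg_nonneg _))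
    · push_neg at hx
      have hr : δ ≤ ‖x - x₀‖ := by rwa [dist_eq_norm] at hx
      have hr2 : δ ^ 2 ≤ ‖x - x₀‖ ^ 2 := by nlinarith
      have h1 : 1 + ‖x - x₀‖ ^ 2 ≤ (1 + δ ^ 2) / δ ^ 2 * (ε + ‖x - x₀‖ ^ 2) := by
        rw [div_mul_eq_mul_div, le_div_iff₀ (by positivity)]
        nlinarith [sq_nonneg (‖x - x₀‖), hε0.le]
      have h2 : (1 + ‖x - x₀‖ ^ 2) ^ (N : ℝ) ≤ C * (ε + ‖x - x₀‖ ^ 2) ^ (N : ℝ) := by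
        calc (1 + ‖x - x₀‖ ^ 2) ^ (N : ℝ)
            ≤ ((1 + δ ^ 2) / δ ^ 2 * (ε + ‖x - x₀‖ ^ 2)) ^ (N : ℝ) :=
              Real.rpow_le_rpow (by positivity) h1 hN0.le
          _ = C * (ε + ‖x - x₀‖ ^ 2) ^ (N : ℝ) :=
              Real.mul_rpow (by positivity) (hpos _).le
      have h3 : (ε + ‖x - x₀‖ ^ 2) ^ (-(N : ℝ)) ≤ C * (1 + ‖x - x₀‖ ^ 2) ^ (-(N : ℝ)) := by
        rw [Real.rpow_neg (hpos _).le, Real.rpow_neg (by positivity : (0:ℝ) ≤ 1 + ‖x - x₀‖ ^ 2),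
          inv_eq_one_div, ← div_eq_mul_inv, div_le_div_iff₀ (by positivity) (by positivity)]
        linarith [h2]
      calc (1 - w x) * f (x - x₀) ≤ 1 * f (x - x₀) :=
            mul_le_mul_of_nonneg_right (by linarith [(hw01 x).1]) (hf_nonneg _)
        _ = ε ^ ((N : ℝ) / 2) * (ε + ‖x - x₀‖ ^ 2) ^ (-(N : ℝ)) := by rw [one_mul]
        _ ≤ ε ^ ((N : ℝ) / 2) * (C * (1 + ‖x - x₀‖ ^ 2) ^ (-(N : ℝ))) :=
            mul_le_mul_of_nonneg_left h3 (rpow_nonneg hε0.le _)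
  -- Step 5: integral bounds
  have hsub_int : Integrable (fun x => (1 - w x) * f (x - x₀)) := by
    have : (fun x => (1 - w x) * f (x - x₀))
        = fun x => f (x - x₀) - w x * f (x - x₀) := by funext x; ring
    rw [this]; exact htrans.sub hI_int
  have hrhs_int : Integrable (fun x => ε ^ ((N : ℝ) / 2) * (C * g (x - x₀))) :=
    (hgtrans.const_mul C).const_mul _
  have hdiff_eq : A - I = ∫ x, (1 - w x) * f (x - x₀) := by
    rw [hIdef, ← hAtrans, ← integral_sub htrans hI_int]
    congr 1; funext x; ring
  have hdiff0 : 0 ≤ A - I := by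
    rw [hdiff_eq]
    exact integral_nonneg fun x => mul_nonneg (sub_nonneg.mpr (hw01 x).2) (hf_nonneg _)
  have hdiff_le : A - I ≤ ε ^ ((N : ℝ) / 2) * (C * A) := by
    rw [hdiff_eq]
    calc (∫ x, (1 - w x) * f (x - x₀))
        ≤ ∫ x, ε ^ ((N : ℝ) / 2) * (C * g (x - x₀)) :=
          integral_mono hsub_int hrhs_int hpw
      _ = ε ^ ((N : ℝ) / 2) * (C * A) := by
          rw [integral_const_mul, integral_const_mul, hAg]
  have hI0 : 0 ≤ I := integral_nonneg fun x => mul_nonneg (hw01 x).1 (hf_nonneg _)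
  have hIA : I ≤ A := by linarith
  -- Step 6: conclusion
  have hstep : A ^ θ - I ^ θ ≤ (A - I) ^ θ := by
    have h := aux_rpow_add_le (A - I) I θ hdiff0 hI0 hθ0.le hθ1
    rw [show A - I + I = A by ring] at h
    linarith
  have hfinal : (A - I) ^ θ ≤ (C * A) ^ θ * ε ^ (((N : ℝ) - 2) / 2) := by
    calc (A - I) ^ θ ≤ (ε ^ ((N : ℝ) / 2) * (C * A)) ^ θ :=
          Real.rpow_le_rpow hdiff0 hdiff_le hθ0.le
      _ = (ε ^ ((N : ℝ) / 2)) ^ θ * (C * A) ^ θ :=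
          Real.mul_rpow (rpow_nonneg hε0.le _) (by positivity)
      _ = (C * A) ^ θ * ε ^ (((N : ℝ) - 2) / 2) := by
          rw [← Real.rpow_mul hε0.le,
            show (N : ℝ) / 2 * θ = ((N : ℝ) - 2) / 2 by
              rw [hθdef]; field_simp]
          ring
  rw [hK₂', hθ, Real.norm_eq_abs, Real.norm_eq_abs,
    abs_of_nonneg (rpow_nonneg hε0.le _), abs_sub_comm,
    abs_of_nonneg (sub_nonneg.mpr (Real.rpow_le_rpow hI0 hIA hθ0.le))]
  linarith
end
end

section
/- Let N ≥ 5 be an integer, Ω ⊂ ℝ^N a nonempty bounded open set, x₀ ∈ Ω, and ζ a smooth function compactly supported in Ω with 0 ≤ ζ ≤ 1 and ζ ≡ 1 on a neighborhood of x₀. Then, as ε → 0⁺, ∫_{ℝ^N} u_{x₀,ε}(x)² dx = K₃ ε + O(ε^{(N−2)/2}). -/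
open MeasureTheory Real Filter Topology Asymptotics

noncomputable section

theorem stmt_10
    (N : ℕ) (hN : 5 ≤ N)
    (Ω : Set (EuclideanSpace ℝ (Fin N)))
    (hΩo : IsOpen Ω) (hΩb : Bornology.IsBounded Ω) (hΩne : Ω.Nonempty)
    (x₀ : EuclideanSpace ℝ (Fin N)) (hx₀ : x₀ ∈ Ω)
    (ζ : EuclideanSpace ℝ (Fin N) → ℝ)
    (hζsm : ContDiff ℝ (⊤ : ℕ∞) ζ) (hζcs : HasCompactSupport ζ) (hζΩ : tsupport ζ ⊆ Ω)
    (hζ01 : ∀ x, 0 ≤ ζ x ∧ ζ x ≤ 1)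
    (hζ1 : ∀ᶠ x in 𝓝 x₀, ζ x = 1)
    (u : ℝ → EuclideanSpace ℝ (Fin N) → ℝ)
    (hu : ∀ ε : ℝ, ∀ x, u ε x =
      ζ x * (ε ^ (((N : ℝ) - 2) / 4) / (ε + ‖x - x₀‖ ^ 2) ^ (((N : ℝ) - 2) / 2)))
    (K₃ : ℝ)
    (hK₃ : K₃ = ∫ y : EuclideanSpace ℝ (Fin N), (1 + ‖y‖ ^ 2) ^ (-((N : ℝ) - 2)))
    :
    (fun ε : ℝ =>
        (∫ x : EuclideanSpace ℝ (Fin N), (u ε x) ^ 2) - K₃ * ε)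
      =O[𝓝[>] (0 : ℝ)] fun ε : ℝ => ε ^ (((N : ℝ) - 2) / 2) := by
  set p : ℝ := (N : ℝ) - 2 with hp
  have hN5 : (5:ℝ) ≤ (N:ℝ) := by exact_mod_cast hN
  have hp3 : (3:ℝ) ≤ p := by rw [hp]; linarith
  have hp0 : (0:ℝ) ≤ p := by linarith
  set F : EuclideanSpace ℝ (Fin N) → ℝ := fun x => (1 + ‖x‖ ^ 2) ^ (-p) with hFdef
  have hF0 : ∀ x, 0 ≤ F x := fun x => Real.rpow_nonneg (by positivity) _
  -- Integrability of F
  have hF : Integrable F := by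
    have h : (Module.finrank ℝ (EuclideanSpace ℝ (Fin N)) : ℝ) < 2 * p := by
      rw [finrank_euclideanSpace_fin, hp]; linarith
    have := integrable_rpow_neg_one_add_norm_sq (μ := (volume : Measure (EuclideanSpace ℝ (Fin N)))) h
    refine this.congr (Eventually.of_forall fun x => ?_)
    rw [hFdef]; congr 1; ring
  set Kc : ℝ := ∫ x : EuclideanSpace ℝ (Fin N), F x with hKc
  have hKc0 : 0 ≤ Kc := integral_nonneg hF0
  have hK₃Kc : K₃ = Kc := hK₃
  -- scaling identity
  have hscale : ∀ ε : ℝ, 0 < ε →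
      (∫ x : EuclideanSpace ℝ (Fin N), (ε + ‖x‖ ^ 2) ^ (-p)) = ε ^ ((N:ℝ)/2 - p) * Kc := by
    intro ε hε
    have hs : (0:ℝ) < Real.sqrt ε := Real.sqrt_pos.2 hε
    have key := Measure.integral_comp_smul_of_nonneg (μ := (volume : Measure (EuclideanSpace ℝ (Fin N))))
      (fun x => (ε + ‖x‖ ^ 2) ^ (-p)) (Real.sqrt ε) (hR := hs.le)
    have h1 : ∀ x : EuclideanSpace ℝ (Fin N),
        (ε + ‖Real.sqrt ε • x‖ ^ 2) ^ (-p) = ε ^ (-p) * (1 + ‖x‖ ^ 2) ^ (-p) := by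
      intro x
      rw [norm_smul, mul_pow, Real.norm_eq_abs, sq_abs, Real.sq_sqrt hε.le]
      rw [← mul_one_add ε (‖x‖^2), Real.mul_rpow hε.le (by positivity)]
    simp only [h1] at key
    rw [integral_const_mul, finrank_euclideanSpace_fin, smul_eq_mul] at key
    have h2 : (Real.sqrt ε) ^ N = ε ^ ((N:ℝ)/2) := by
      rw [← Real.rpow_natCast (Real.sqrt ε) N, Real.sqrt_eq_rpow,
        ← Real.rpow_mul hε.le]
      ring_nf
    rw [h2, ← Real.rpow_neg hε.le] at key
    have := congrArg (fun t => ε ^ ((N:ℝ)/2) * t) key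
    rw [← mul_assoc, ← Real.rpow_add hε, ← mul_assoc, ← Real.rpow_add hε] at this
    rw [add_neg_cancel, Real.rpow_zero, one_mul] at this
    rw [← this]
    congr 1
  -- integrability of the kernel
  have hker : ∀ ε : ℝ, 0 < ε → Integrable (fun x : EuclideanSpace ℝ (Fin N) => (ε + ‖x‖ ^ 2) ^ (-p)) := by
    intro ε hε
    have hs : (0:ℝ) < Real.sqrt ε := Real.sqrt_pos.2 hε
    have h1 : ∀ x : EuclideanSpace ℝ (Fin N),
        (ε + ‖Real.sqrt ε • x‖ ^ 2) ^ (-p) = ε ^ (-p) * (1 + ‖x‖ ^ 2) ^ (-p) := by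
      intro x
      rw [norm_smul, mul_pow, Real.norm_eq_abs, sq_abs, Real.sq_sqrt hε.le]
      rw [← mul_one_add ε (‖x‖^2), Real.mul_rpow hε.le (by positivity)]
    have h2 : Integrable (fun x : EuclideanSpace ℝ (Fin N) => (ε + ‖Real.sqrt ε • x‖ ^ 2) ^ (-p)) := by
      refine (hF.const_mul (ε ^ (-p))).congr (Eventually.of_forall fun x => ?_)
      exact (h1 x).symm
    exact (integrable_comp_smul_iff (volume : Measure (EuclideanSpace ℝ (Fin N)))
      (fun x : EuclideanSpace ℝ (Fin N) => (ε + ‖x‖ ^ 2) ^ (-p)) hs.ne').1 h2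
  have hkert : ∀ ε : ℝ, 0 < ε →
      Integrable (fun x : EuclideanSpace ℝ (Fin N) => (ε + ‖x - x₀‖ ^ 2) ^ (-p)) := by
    intro ε hε
    exact (hker ε hε).comp_sub_right x₀
  -- pointwise formula for u²
  have hupt : ∀ ε : ℝ, 0 < ε → ∀ x : EuclideanSpace ℝ (Fin N), (u ε x) ^ 2
      = ζ x ^ 2 * (ε ^ (p/2) * (ε + ‖x - x₀‖ ^ 2) ^ (-p)) := by
    intro ε hε x
    rw [hu ε x]
    have hA : (0:ℝ) < ε + ‖x - x₀‖ ^ 2 := by positivity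
    rw [mul_pow, div_pow]
    congr 1
    have e1 : (ε ^ (p/4)) ^ 2 = ε ^ (p/2) := by
      rw [← Real.rpow_natCast (ε ^ (p/4)) 2, ← Real.rpow_mul hε.le]
      congr 1
      push_cast
      ring
    have e2 : ((ε + ‖x - x₀‖ ^ 2) ^ (p/2)) ^ 2 = (ε + ‖x - x₀‖ ^ 2) ^ p := by
      rw [← Real.rpow_natCast ((ε + ‖x - x₀‖ ^ 2) ^ (p/2)) 2, ← Real.rpow_mul hA.le]
      congr 1
      push_cast
      ring
    rw [e1, e2, Real.rpow_neg hA.le, div_eq_mul_inv]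
  -- integral of the kernel part
  have hgint : ∀ ε : ℝ, 0 < ε →
      (∫ x : EuclideanSpace ℝ (Fin N), ε ^ (p/2) * (ε + ‖x - x₀‖ ^ 2) ^ (-p)) = Kc * ε := by
    intro ε hε
    rw [integral_const_mul]
    rw [integral_sub_right_eq_self (μ := (volume : Measure (EuclideanSpace ℝ (Fin N))))
      (fun x : EuclideanSpace ℝ (Fin N) => (ε + ‖x‖ ^ 2) ^ (-p)) x₀]
    rw [hscale ε hε, ← mul_assoc, ← Real.rpow_add hε]
    have : p/2 + ((N:ℝ)/2 - p) = 1 := by rw [hp]; ring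
    rw [this, Real.rpow_one, mul_comm]
  -- choose δ
  obtain ⟨δ, hδ0, hδ⟩ := Metric.eventually_nhds_iff.1 hζ1
  set C : ℝ := ((1 + δ^2)/δ^2) ^ p with hC
  have hC0 : 0 ≤ C := Real.rpow_nonneg (by positivity) _
  -- pointwise bound
  have hbound : ∀ ε : ℝ, 0 < ε → ∀ x : EuclideanSpace ℝ (Fin N),
      ‖ζ x ^ 2 * (ε ^ (p/2) * (ε + ‖x - x₀‖ ^ 2) ^ (-p))
        - ε ^ (p/2) * (ε + ‖x - x₀‖ ^ 2) ^ (-p)‖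
      ≤ ε ^ (p/2) * (C * F (x - x₀)) := by
    intro ε hε x
    have hRHS : 0 ≤ ε ^ (p/2) * (C * F (x - x₀)) := by
      have := hF0 (x - x₀)
      positivity
    by_cases hx : dist x x₀ < δ
    · rw [hδ hx]
      simpa using hRHS
    · push_neg at hx
      have hr : δ ≤ ‖x - x₀‖ := by rwa [dist_eq_norm] at hx
      set r : ℝ := ‖x - x₀‖ with hr'
      have hζb : |ζ x ^ 2 - 1| ≤ 1 := by
        have h1 := (hζ01 x).1; have h2 := (hζ01 x).2
        rw [abs_le]; constructor <;> nlinarith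
      have hcore : (ε + r ^ 2) ^ (-p) ≤ C * (1 + r ^ 2) ^ (-p) := by
        have hb : δ^2/(1+δ^2) * (1 + r^2) ≤ ε + r^2 := by
          rw [div_mul_eq_mul_div, div_le_iff₀ (by positivity)]
          nlinarith [hε.le, hδ0, hr, sq_nonneg r]
        have h0 : (0:ℝ) < δ^2/(1+δ^2) * (1 + r^2) := by positivity
        calc (ε + r ^ 2) ^ (-p)
            ≤ (δ^2/(1+δ^2) * (1 + r^2)) ^ (-p) :=
              Real.rpow_le_rpow_of_nonpos h0 hb (neg_nonpos.2 hp0)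
          _ = (δ^2/(1+δ^2)) ^ (-p) * (1 + r^2) ^ (-p) :=
              Real.mul_rpow (by positivity) (by positivity)
          _ = C * (1 + r^2) ^ (-p) := by
              congr 1
              rw [Real.rpow_neg (by positivity), hC,
                show ((1 + δ^2)/δ^2 : ℝ) = (δ^2/(1+δ^2))⁻¹ by rw [inv_div],
                Real.inv_rpow (by positivity)]
      have h1 : ζ x ^ 2 * (ε ^ (p/2) * (ε + r ^ 2) ^ (-p))
          - ε ^ (p/2) * (ε + r ^ 2) ^ (-p)
          = (ζ x ^ 2 - 1) * (ε ^ (p/2) * (ε + r ^ 2) ^ (-p)) := by ring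
      rw [h1, norm_mul, Real.norm_eq_abs, Real.norm_eq_abs]
      have h2 : |ε ^ (p/2) * (ε + r ^ 2) ^ (-p)| = ε ^ (p/2) * (ε + r ^ 2) ^ (-p) := by
        refine abs_of_nonneg ?_
        have h3 : (0:ℝ) < ε + r^2 := by positivity
        have := Real.rpow_nonneg h3.le (-p)
        positivity
      rw [h2]
      calc |ζ x ^ 2 - 1| * (ε ^ (p/2) * (ε + r ^ 2) ^ (-p))
          ≤ 1 * (ε ^ (p/2) * (ε + r ^ 2) ^ (-p)) := by
            apply mul_le_mul_of_nonneg_right hζb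
            have h3 : (0:ℝ) < ε + r^2 := by positivity
            have := Real.rpow_nonneg h3.le (-p)
            positivity
        _ = ε ^ (p/2) * (ε + r ^ 2) ^ (-p) := one_mul _
        _ ≤ ε ^ (p/2) * (C * (1 + r^2) ^ (-p)) := by
            apply mul_le_mul_of_nonneg_left hcore (Real.rpow_nonneg hε.le _)
        _ = ε ^ (p/2) * (C * F (x - x₀)) := rfl
  -- conclusion
  rw [isBigO_iff]
  refine ⟨C * Kc, ?_⟩
  filter_upwards [self_mem_nhdsWithin] with ε hε
  have hε : (0:ℝ) < ε := hε
  set g : EuclideanSpace ℝ (Fin N) → ℝ := fun x => ε ^ (p/2) * (ε + ‖x - x₀‖ ^ 2) ^ (-p) with hg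
  have hgI : Integrable g := ((hkert ε hε).const_mul _)
  have hζgI : Integrable (fun x => ζ x ^ 2 * g x) := by
    refine hgI.bdd_mul ((hζsm.continuous.pow 2).aestronglyMeasurable) (c := 1) (Eventually.of_forall fun x => ?_)
    rw [Real.norm_eq_abs, abs_of_nonneg (by positivity)]
    exact pow_le_one₀ (hζ01 x).1 (hζ01 x).2
  have hInt : (∫ x : EuclideanSpace ℝ (Fin N), (u ε x) ^ 2) = ∫ x : EuclideanSpace ℝ (Fin N), ζ x ^ 2 * g x :=
    integral_congr_ae (Eventually.of_forall (hupt ε hε))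
  have hsplit : (∫ x : EuclideanSpace ℝ (Fin N), (u ε x) ^ 2) - K₃ * ε = ∫ x : EuclideanSpace ℝ (Fin N), (ζ x ^ 2 * g x - g x) := by
    rw [hInt, integral_sub hζgI hgI, hK₃Kc, ← hgint ε hε]
  rw [hsplit]
  have hBI : Integrable (fun x : EuclideanSpace ℝ (Fin N) => ε ^ (p/2) * (C * F (x - x₀))) :=
    ((hF.comp_sub_right x₀).const_mul C).const_mul _
  have hle := norm_integral_le_of_norm_le hBI
    (Eventually.of_forall (hbound ε hε))
  have hBval : (∫ x : EuclideanSpace ℝ (Fin N), ε ^ (p/2) * (C * F (x - x₀))) = ε ^ (p/2) * (C * Kc) := by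
    rw [integral_const_mul, integral_const_mul,
      integral_sub_right_eq_self (μ := (volume : Measure (EuclideanSpace ℝ (Fin N)))) F x₀]
  rw [hBval] at hle
  calc ‖∫ x : EuclideanSpace ℝ (Fin N), (ζ x ^ 2 * g x - g x)‖ ≤ ε ^ (p/2) * (C * Kc) := hle
    _ = C * Kc * ‖ε ^ (p/2)‖ := by
        rw [Real.norm_eq_abs, abs_of_nonneg (Real.rpow_nonneg hε.le _)]; ring
end
end

section
/- Let N = 4, Ω ⊂ ℝ^4 a nonempty bounded open set, x₀ ∈ Ω, and ζ a smooth function compactly supported in Ω with 0 ≤ ζ ≤ 1 and ζ ≡ 1 on a neighborhood of x₀. Then, as ε → 0⁺, ∫_{ℝ^4} u_{x₀,ε}(x)² dx = (ω₄/2) ε |log ε| + o(ε |log ε|), where ω₄ = 2π² is the surface area of the unit sphere S³ in ℝ⁴. -/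
open MeasureTheory Real Filter Topology Asymptotics Set Metric

noncomputable section


/-FTC-/
lemma aux_ftc (ε ρ : ℝ) (hε : 0 < ε) (hρ : 0 < ρ) :
    ∫ r in (0:ℝ)..ρ, r ^ 3 * (ε / (ε + r ^ 2) ^ 2) =
      ε / 2 * (Real.log (ε + ρ ^ 2) - Real.log ε - ρ ^ 2 / (ε + ρ ^ 2)) := by
  have hpos : ∀ r : ℝ, 0 < ε + r ^ 2 := fun r => by positivity
  have hderiv : ∀ r ∈ Set.uIcc (0:ℝ) ρ, HasDerivAt
      (fun r => ε / 2 * (Real.log (ε + r ^ 2) + ε / (ε + r ^ 2)))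
      (r ^ 3 * (ε / (ε + r ^ 2) ^ 2)) r := by
    intro r _
    have h1 : HasDerivAt (fun r : ℝ => ε + r ^ 2) (2 * r) r := by
      simpa using ((hasDerivAt_pow 2 r).const_add ε)
    have h2 : HasDerivAt (fun r : ℝ => Real.log (ε + r ^ 2)) (2 * r / (ε + r ^ 2)) r :=
      (h1.log (hpos r).ne')
    have h3 : HasDerivAt (fun r : ℝ => ε / (ε + r ^ 2))
        (-(ε * (2 * r)) / (ε + r ^ 2) ^ 2) r := by
      exact ((hasDerivAt_const r ε).div h1 (hpos r).ne').congr_deriv (by ring)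
    have := ((h2.add h3).const_mul (ε / 2))
    refine this.congr_deriv ?_
    have hne := (hpos r).ne'
    field_simp
    ring
  have hcont : IntervalIntegrable (fun r => r ^ 3 * (ε / (ε + r ^ 2) ^ 2)) volume 0 ρ := by
    apply Continuous.intervalIntegrable
    exact continuous_pow 3 |>.mul (continuous_const.div
      ((continuous_const.add (continuous_pow 2)).pow 2)
      (fun r => pow_ne_zero _ (hpos r).ne'))
  rw [intervalIntegral.integral_eq_sub_of_hasDerivAt hderiv hcont]
  have h0 : ε + ρ ^ 2 ≠ 0 := (hpos ρ).ne'
  field_simp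
  ring

abbrev E4 := EuclideanSpace ℝ (Fin 4)

lemma aux_vol : (volume (Metric.ball (0 : E4) 1)).toReal = π ^ 2 / 2 := by
  rw [EuclideanSpace.volume_ball]
  have h1 : ((4:ℕ):ℝ) / 2 + 1 = ((2:ℕ):ℝ) + 1 := by norm_num
  have : Real.Gamma ((Fintype.card (Fin 4)) / 2 + 1) = 2 := by
    rw [show ((Fintype.card (Fin 4) : ℝ)) = ((4:ℕ):ℝ) by norm_num, h1,
      Real.Gamma_nat_eq_factorial]
    norm_num
  rw [this]
  have h2 : Real.sqrt π ^ Fintype.card (Fin 4) = π ^ 2 := by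
    rw [show Fintype.card (Fin 4) = 4 by norm_num]
    rw [show (4:ℕ) = 2*2 by norm_num, pow_mul, Real.sq_sqrt Real.pi_nonneg]
  rw [h2]
  simp [ENNReal.toReal_ofReal (by positivity : (0:ℝ) ≤ π ^ 2 / 2)]

lemma aux_ball_integral (x₀ : E4) (ε ρ : ℝ) (hε : 0 < ε) (hρ : 0 < ρ) :
    ∫ x : E4, (Metric.ball x₀ ρ).indicator
        (fun x => ε / (ε + ‖x - x₀‖ ^ 2) ^ 2) x
      = π ^ 2 * ε * (Real.log (ε + ρ ^ 2) - Real.log ε - ρ ^ 2 / (ε + ρ ^ 2)) := by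
  have hpos : ∀ r : ℝ, 0 < ε + r ^ 2 := fun r => by positivity
  set f : ℝ → ℝ := (Set.Iio ρ).indicator (fun r => ε / (ε + r ^ 2) ^ 2) with hf
  have step1 : ∀ x : E4, (Metric.ball x₀ ρ).indicator
      (fun x => ε / (ε + ‖x - x₀‖ ^ 2) ^ 2) x = f ‖x - x₀‖ := by
    intro x
    by_cases h : x ∈ Metric.ball x₀ ρ
    · rw [Set.indicator_of_mem h, hf, Set.indicator_of_mem]
      rwa [Set.mem_Iio, ← dist_eq_norm]
    · rw [Set.indicator_of_notMem h, hf, Set.indicator_of_notMem]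
      rw [Set.mem_Iio, ← dist_eq_norm]
      exact fun hc => h hc
  simp_rw [step1]
  have step2 : (∫ x : E4, f ‖x - x₀‖) = ∫ x : E4, f ‖x‖ :=
    integral_sub_right_eq_self (fun x => f ‖x‖) x₀
  rw [step2, integral_fun_norm_addHaar volume f]
  have hdim : Module.finrank ℝ E4 = 4 := by simp [finrank_euclideanSpace]
  rw [hdim, measureReal_def, aux_vol]
  have step3 : (∫ y in Set.Ioi (0:ℝ), y ^ (4-1) • f y)
      = ∫ y in Set.Ioo (0:ℝ) ρ, y ^ 3 * (ε / (ε + y ^ 2) ^ 2) := by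
    have : ∀ y : ℝ, y ^ (4-1) • f y
        = (Set.Iio ρ).indicator (fun y => y ^ 3 * (ε / (ε + y ^ 2) ^ 2)) y := by
      intro y
      rw [hf, smul_eq_mul]
      by_cases h : y ∈ Set.Iio ρ <;>
        simp [Set.indicator_of_mem, Set.indicator_of_notMem, h]
    simp_rw [this]
    rw [setIntegral_indicator measurableSet_Iio, Set.Ioi_inter_Iio]
  rw [step3, ← MeasureTheory.integral_Ioc_eq_integral_Ioo,
    ← intervalIntegral.integral_of_le hρ.le, aux_ftc ε ρ hε hρ]
  rw [nsmul_eq_mul, smul_eq_mul]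
  push_cast
  ring


lemma aux_cont (x₀ : E4) (ε : ℝ) (hε : 0 < ε) :
    Continuous (fun x : E4 => ε / (ε + ‖x - x₀‖ ^ 2) ^ 2) := by
  refine continuous_const.div ?_ (fun x => ?_)
  · exact (continuous_const.add ((continuous_id.sub continuous_const).norm.pow 2)).pow 2
  · have : (0:ℝ) < ε + ‖x - x₀‖ ^ 2 := by positivity
    positivity

lemma aux_integrable (x₀ : E4) (ε ρ : ℝ) (hε : 0 < ε) :
    Integrable ((Metric.ball x₀ ρ).indicator
      (fun x : E4 => ε / (ε + ‖x - x₀‖ ^ 2) ^ 2)) := by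
  rw [integrable_indicator_iff measurableSet_ball]
  exact ((aux_cont x₀ ε hε).continuousOn.integrableOn_compact
    (isCompact_closedBall x₀ ρ)).mono_set ball_subset_closedBall

set_option maxHeartbeats 2000000 in
theorem stmt_11
    (N : ℕ) (hN : N = 4)
    (Ω : Set (EuclideanSpace ℝ (Fin N)))
    (hΩo : IsOpen Ω) (hΩb : Bornology.IsBounded Ω) (hΩne : Ω.Nonempty)
    (x₀ : EuclideanSpace ℝ (Fin N)) (hx₀ : x₀ ∈ Ω)
    (ζ : EuclideanSpace ℝ (Fin N) → ℝ)
    (hζsm : ContDiff ℝ (⊤ : ℕ∞) ζ) (hζcs : HasCompactSupport ζ) (hζΩ : tsupport ζ ⊆ Ω)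
    (hζ01 : ∀ x, 0 ≤ ζ x ∧ ζ x ≤ 1)
    (hζ1 : ∀ᶠ x in 𝓝 x₀, ζ x = 1)
    (u : ℝ → EuclideanSpace ℝ (Fin N) → ℝ)
    (hu : ∀ ε : ℝ, ∀ x, u ε x =
      ζ x * (ε ^ (((N : ℝ) - 2) / 4) / (ε + ‖x - x₀‖ ^ 2) ^ (((N : ℝ) - 2) / 2)))
    :
    (fun ε : ℝ =>
        (∫ x : EuclideanSpace ℝ (Fin N), (u ε x) ^ 2)
          - (2 * Real.pi ^ 2 / 2) * ε * |Real.log ε|)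
      =o[𝓝[>] (0 : ℝ)] fun ε : ℝ => ε * |Real.log ε| := by
  subst hN
  set g : ℝ → E4 → ℝ := fun ε x => ε / (ε + ‖x - x₀‖ ^ 2) ^ 2 with hg
  -- pointwise formula for the square
  have hdenpos : ∀ (ε : ℝ) (x : E4), 0 < ε → (0:ℝ) < ε + ‖x - x₀‖ ^ 2 := by
    intro ε x hε; positivity
  have key : ∀ ε : ℝ, 0 < ε → ∀ x : E4, u ε x ^ 2 = ζ x ^ 2 * g ε x := by
    intro ε hε x
    rw [hu]
    have e1 : (((4:ℕ):ℝ) - 2) / 4 = (1/2 : ℝ) := by norm_num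
    have e2 : (((4:ℕ):ℝ) - 2) / 2 = (1 : ℝ) := by norm_num
    rw [e1, e2, Real.rpow_one, mul_pow, div_pow]
    have h12 : (ε ^ (1/2 : ℝ)) ^ 2 = ε := by
      rw [← Real.rpow_natCast (ε ^ (1/2:ℝ)) 2, ← Real.rpow_mul hε.le]
      norm_num
    rw [h12, hg]
  -- choose δ and R
  obtain ⟨δ, hδpos, hδ⟩ : ∃ δ > 0, ∀ y : E4, dist y x₀ < δ → ζ y = 1 := by
    rcases Metric.eventually_nhds_iff.1 hζ1 with ⟨δ, hδpos, h⟩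
    exact ⟨δ, hδpos, fun y hy => h hy⟩
  obtain ⟨R₀, hR₀⟩ := hζcs.isBounded.subset_ball x₀
  set R : ℝ := max R₀ 1 with hRdef
  have hR1 : (1:ℝ) ≤ R := le_max_right _ _
  have hRpos : (0:ℝ) < R := lt_of_lt_of_le one_pos hR1
  have hsubR : tsupport ζ ⊆ Metric.ball x₀ R :=
    hR₀.trans (Metric.ball_subset_ball (le_max_left _ _))
  -- the two-sided bound on the integral
  have hgnonneg : ∀ (ε : ℝ) (x : E4), 0 < ε → 0 ≤ g ε x := by
    intro ε x hε
    have := hdenpos ε x hε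
    rw [hg]; positivity
  have hbound : ∀ ε ∈ Set.Ioo (0:ℝ) 1,
      Real.pi ^ 2 * ε * (Real.log (ε + δ^2) - Real.log ε - δ^2/(ε + δ^2))
        ≤ (∫ x : E4, u ε x ^ 2) ∧
      (∫ x : E4, u ε x ^ 2)
        ≤ Real.pi ^ 2 * ε * (Real.log (ε + R^2) - Real.log ε - R^2/(ε + R^2)) := by
    rintro ε ⟨hε, hε1⟩
    have hIl := aux_integrable x₀ ε δ hε
    have hIu := aux_integrable x₀ ε R hε
    have hcont2 : Continuous (fun x : E4 => ζ x ^ 2 * g ε x) :=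
      (hζsm.continuous.pow 2).mul (aux_cont x₀ ε hε)
    have hequ : (fun x : E4 => u ε x ^ 2) = fun x => ζ x ^ 2 * g ε x :=
      funext (key ε hε)
    have hle2 : (fun x : E4 => u ε x ^ 2)
        ≤ (Metric.ball x₀ R).indicator (g ε) := by
      intro x
      simp only [key ε hε]
      by_cases h : x ∈ Metric.ball x₀ R
      · rw [Set.indicator_of_mem h]
        have h1 : ζ x ^ 2 ≤ 1 := by
          have := (hζ01 x).1; have := (hζ01 x).2; nlinarith
        exact mul_le_of_le_one_left (hgnonneg ε x hε) h1
      · rw [Set.indicator_of_notMem h]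
        have hz : ζ x = 0 := image_eq_zero_of_notMem_tsupport (fun hc => h (hsubR hc))
        simp [hz]
    have hIu2 : Integrable (fun x : E4 => u ε x ^ 2) := by
      refine hIu.mono' (by rw [hequ]; exact hcont2.aestronglyMeasurable) ?_
      filter_upwards with x
      rw [Real.norm_eq_abs, abs_of_nonneg (sq_nonneg _)]
      exact hle2 x
    have hle1 : (Metric.ball x₀ δ).indicator (g ε) ≤ fun x : E4 => u ε x ^ 2 := by
      intro x
      simp only [key ε hε]
      by_cases h : x ∈ Metric.ball x₀ δ
      · rw [Set.indicator_of_mem h]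
        have hz : ζ x = 1 := hδ x (Metric.mem_ball.1 h)
        simp [hz]
      · rw [Set.indicator_of_notMem h]
        exact mul_nonneg (sq_nonneg _) (hgnonneg ε x hε)
    constructor
    · rw [← aux_ball_integral x₀ ε δ hε hδpos]
      exact integral_mono hIl hIu2 hle1
    · rw [← aux_ball_integral x₀ ε R hε hRpos]
      exact integral_mono hIu2 hIu hle2
  -- the constant
  set C : ℝ := Real.pi ^ 2 * (|Real.log (δ^2)| + 1 + Real.log (1 + R^2)) with hC
  have hlog1R : 0 ≤ Real.log (1 + R^2) := Real.log_nonneg (by nlinarith)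
  have hCpos : 0 < C := by
    rw [hC]
    have := Real.pi_pos
    have h1 : (0:ℝ) ≤ |Real.log (δ^2)| := abs_nonneg _
    nlinarith
  have hmain : ∀ ε ∈ Set.Ioo (0:ℝ) 1,
      abs ((∫ x : E4, u ε x ^ 2) - (2 * Real.pi ^ 2 / 2) * ε * |Real.log ε|) ≤ C * ε := by
    rintro ε ⟨hε, hε1⟩
    obtain ⟨hlow, hup⟩ := hbound ε ⟨hε, hε1⟩
    have hlogε : |Real.log ε| = -Real.log ε := abs_of_neg (Real.log_neg hε hε1)
    have hπ : (2 * Real.pi ^ 2 / 2) = Real.pi ^ 2 := by ring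
    rw [hπ, hlogε, abs_le, hC]
    have hδ2 : (0:ℝ) < δ ^ 2 := by positivity
    have hεδ : (0:ℝ) < ε + δ ^ 2 := by positivity
    have hεR : (0:ℝ) < ε + R ^ 2 := by positivity
    have l1 : Real.log (δ^2) ≤ Real.log (ε + δ^2) :=
      Real.log_le_log hδ2 (by linarith)
    have l2 : δ^2 / (ε + δ^2) ≤ 1 := by
      rw [div_le_one hεδ]; linarith
    have l3 : Real.log (ε + R^2) ≤ Real.log (1 + R^2) :=
      Real.log_le_log hεR (by linarith)
    have l4 : 0 ≤ R^2 / (ε + R^2) := by positivity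
    have labs : -|Real.log (δ^2)| ≤ Real.log (δ^2) := neg_abs_le _
    have hπε : (0:ℝ) ≤ Real.pi^2 * ε := by positivity
    have low1 : Real.log (δ^2) - 1 ≤ Real.log (ε + δ^2) - δ^2/(ε + δ^2) := by linarith
    have u1 : Real.log (ε + R^2) - R^2/(ε + R^2) ≤ Real.log (1 + R^2) := by linarith
    have m1 := mul_le_mul_of_nonneg_left low1 hπε
    have m2 := mul_le_mul_of_nonneg_left u1 hπε
    have prod1 : 0 ≤ (Real.pi^2 * ε) * ((Real.log (δ^2) + |Real.log (δ^2)|) + Real.log (1 + R^2)) :=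
      mul_nonneg hπε (add_nonneg (by linarith) hlog1R)
    have prod2 : 0 ≤ (Real.pi^2 * ε) * (|Real.log (δ^2)| + 1) :=
      mul_nonneg hπε (by positivity)
    constructor
    · nlinarith [hlow, m1, prod1]
    · nlinarith [hup, m2, prod2]
  -- conclude
  rw [Asymptotics.isLittleO_iff]
  intro c hc
  set ε₀ : ℝ := min 1 (Real.exp (-(C/c))) with hε₀
  have hε₀pos : 0 < ε₀ := lt_min one_pos (Real.exp_pos _)
  filter_upwards [Ioo_mem_nhdsGT_of_mem
    (show (0:ℝ) ∈ Set.Ico 0 ε₀ from ⟨le_refl _, hε₀pos⟩)] with ε hεm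
  obtain ⟨hε, hεlt⟩ := hεm
  have hε1 : ε < 1 := lt_of_lt_of_le hεlt (min_le_left _ _)
  have hεe : ε < Real.exp (-(C/c)) := lt_of_lt_of_le hεlt (min_le_right _ _)
  have hlog : Real.log ε < -(C/c) := by
    calc Real.log ε < Real.log (Real.exp (-(C/c))) := Real.log_lt_log hε hεe
    _ = -(C/c) := Real.log_exp _
  have hlogε : |Real.log ε| = -Real.log ε := abs_of_neg (Real.log_neg hε hε1)
  have h1 : C / c < -Real.log ε := by linarith
  have h2 : C < c * (-Real.log ε) := by
    rw [div_lt_iff₀ hc] at h1; linarith [h1]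
  have hb := hmain ε ⟨hε, hε1⟩
  rw [Real.norm_eq_abs, Real.norm_eq_abs]
  calc abs ((∫ x : E4, u ε x ^ 2) - (2 * Real.pi ^ 2 / 2) * ε * |Real.log ε|)
      ≤ C * ε := hb
    _ ≤ c * abs (ε * |Real.log ε|) := by
        rw [abs_of_nonneg (mul_nonneg hε.le (abs_nonneg _)), hlogε]
        nlinarith
end
end

section
/- Let N ≥ 1 be an integer, x₀ ∈ ℝ^N, and let u : ℝ^N → ℝ be a continuously differentiable function with compact support. Then ∫_{ℝ^N} (∇u(x)·(x−x₀))² dx ≥ (N/2)² ∫_{ℝ^N} u(x)² dx. -/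
/-!
Integrating by parts coordinate by coordinate, `∫ ∇v(x)·(x - x₀) = -N ∫ v` since the vector
field `x - x₀` has divergence `N`. Applied to `v = u²` this gives
`∫ (∇u(x)·(x - x₀)) u = -(N/2) ∫ u²`, and expanding `0 ≤ ∫ (∇u(x)·(x - x₀) + (N/2) u)²`
yields the inequality.
-/

open MeasureTheory Module

theorem HasCompactSupport.fderiv_apply_sub {E : Type*} [NormedAddCommGroup E] [NormedSpace ℝ E]
    {v : E → ℝ} (hvs : HasCompactSupport v) (x₀ : E) :
    HasCompactSupport fun x => fderiv ℝ v x (x - x₀) :=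
  (hvs.fderiv ℝ).mono fun x hx h0 => hx (by simp [h0])

section HaarMeasure

variable {E : Type*} [NormedAddCommGroup E] [NormedSpace ℝ E] [FiniteDimensional ℝ E]
  [MeasurableSpace E] [BorelSpace E] (μ : Measure E) [μ.IsAddHaarMeasure]

theorem integral_fderiv_apply_sub {v : E → ℝ} (hv : ContDiff ℝ 1 v) (hvs : HasCompactSupport v)
    (x₀ : E) : ∫ x, fderiv ℝ v x (x - x₀) ∂μ = -(finrank ℝ E : ℝ) * ∫ x, v x ∂μ := by
  set b := finBasis ℝ E
  set c : Fin (finrank ℝ E) → E →L[ℝ] ℝ := fun i => LinearMap.toContinuousLinearMap (b.coord i)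
  have hDv : Continuous (fderiv ℝ v) := hv.continuous_fderiv one_ne_zero
  have hdecomp : ∀ x, fderiv ℝ v x (x - x₀) = ∑ i, (c i x - c i x₀) * fderiv ℝ v x (b i) := by
    intro x
    conv_lhs => rw [← b.sum_repr (x - x₀)]
    simp [c, map_sum, b.coord_apply]
  have hint : ∀ i, Integrable (fun x => (c i x - c i x₀) * fderiv ℝ v x (b i)) μ := fun i =>
    (((c i).continuous.sub continuous_const).mul (hDv.clm_apply continuous_const)
      ).integrable_of_hasCompactSupport (hvs.fderiv_apply ℝ (b i)).mul_left
  have hibp : ∀ i, ∫ x, (c i x - c i x₀) * fderiv ℝ v x (b i) ∂μ = -∫ x, v x ∂μ := by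
    intro i
    have hci : ∀ x, HasFDerivAt (fun y => c i y - c i x₀) (c i) x :=
      fun x => (c i).hasFDerivAt.sub_const _
    have hcib : c i (b i) = 1 := by simp [c]
    rw [integral_mul_fderiv_eq_neg_fderiv_mul_of_integrable (μ := μ)]
    · simp [(hci _).fderiv, hcib]
    · simpa [(hci _).fderiv, hcib] using hv.continuous.integrable_of_hasCompactSupport hvs
    · exact hint i
    · exact (((c i).continuous.sub continuous_const).mul hv.continuous
        ).integrable_of_hasCompactSupport hvs.mul_left
    · exact fun x _ => (hci x).differentiableAt
    · exact fun x _ => hv.differentiable one_ne_zero x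
  rw [integral_congr_ae (.of_forall hdecomp), integral_finsetSum _ fun i _ => hint i]
  simp [hibp]

theorem integral_fderiv_apply_sub_mul_self {v : E → ℝ} (hv : ContDiff ℝ 1 v)
    (hvs : HasCompactSupport v) (x₀ : E) :
    ∫ x, fderiv ℝ v x (x - x₀) * v x ∂μ = -(finrank ℝ E / 2 : ℝ) * ∫ x, v x ^ 2 ∂μ := by
  have hderiv_sq : ∀ x, fderiv ℝ (fun y => v y ^ 2) x (x - x₀) = 2 * (fderiv ℝ v x (x - x₀) * v x) := by
    intro x
    rw [((hv.differentiable one_ne_zero x).hasFDerivAt.pow 2).fderiv]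
    simp only [nsmul_eq_mul, Nat.cast_ofNat, smul_apply, smul_eq_mul]
    ring
  have h := integral_fderiv_apply_sub μ (hv.pow 2) (hvs.mono fun x hx h0 => hx (by simp [h0])) x₀
  rw [integral_congr_ae (.of_forall hderiv_sq), integral_const_mul] at h
  linarith

theorem finrank_div_two_sq_mul_integral_sq_le {v : E → ℝ} (hv : ContDiff ℝ 1 v)
    (hvs : HasCompactSupport v) (x₀ : E) :
    (finrank ℝ E / 2 : ℝ) ^ 2 * ∫ x, v x ^ 2 ∂μ ≤ ∫ x, fderiv ℝ v x (x - x₀) ^ 2 ∂μ := by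
  set F := fun x => fderiv ℝ v x (x - x₀)
  set c : ℝ := finrank ℝ E / 2
  have hF : Continuous F := (hv.continuous_fderiv one_ne_zero).clm_apply (by fun_prop)
  have hFs : HasCompactSupport F := hvs.fderiv_apply_sub x₀
  have hF2 : Integrable (fun x => F x ^ 2) μ :=
    (hF.pow 2).integrable_of_hasCompactSupport (hFs.mono fun x hx h0 => hx (by simp [h0]))
  have hFv : Integrable (fun x => 2 * c * (F x * v x)) μ :=
    ((hF.mul hv.continuous).integrable_of_hasCompactSupport hvs.mul_left).const_mul _
  have hv2 : Integrable (fun x => c ^ 2 * v x ^ 2) μ :=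
    ((hv.continuous.pow 2).integrable_of_hasCompactSupport
      (hvs.mono fun x hx h0 => hx (by simp [h0]))).const_mul _
  have hnonneg : 0 ≤ ∫ x, (F x + c * v x) ^ 2 ∂μ := integral_nonneg fun x => sq_nonneg _
  have hexp : ∫ x, (F x + c * v x) ^ 2 ∂μ
      = ∫ x, F x ^ 2 ∂μ + 2 * c * ∫ x, F x * v x ∂μ + c ^ 2 * ∫ x, v x ^ 2 ∂μ := by
    calc ∫ x, (F x + c * v x) ^ 2 ∂μ
        = ∫ x, F x ^ 2 + 2 * c * (F x * v x) + c ^ 2 * v x ^ 2 ∂μ := by congr with x; ring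
      _ = _ := by
        rw [integral_add (f := fun x => F x ^ 2 + 2 * c * (F x * v x)) (hF2.add hFv) hv2,
          integral_add hF2 hFv, integral_const_mul, integral_const_mul]
  rw [hexp, integral_fderiv_apply_sub_mul_self μ hv hvs x₀, ← show c = finrank ℝ E / 2 from rfl]
    at hnonneg
  linarith

end HaarMeasure

theorem stmt_14_general
    (N : ℕ)
    (x₀ : EuclideanSpace ℝ (Fin N))
    (u : EuclideanSpace ℝ (Fin N) → ℝ)
    (hu : ContDiff ℝ 1 u) (hus : HasCompactSupport u) :
    (∫ x : EuclideanSpace ℝ (Fin N), (fderiv ℝ u x (x - x₀)) ^ 2)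
      ≥ ((N : ℝ) / 2) ^ 2 * ∫ x : EuclideanSpace ℝ (Fin N), (u x) ^ 2 := by
  simpa [finrank_euclideanSpace_fin] using finrank_div_two_sq_mul_integral_sq_le volume hu hus x₀

theorem stmt_14
    (N : ℕ) (hN : 1 ≤ N)
    (x₀ : EuclideanSpace ℝ (Fin N))
    (u : EuclideanSpace ℝ (Fin N) → ℝ)
    (hu : ContDiff ℝ 1 u) (hus : HasCompactSupport u) :
    (∫ x : EuclideanSpace ℝ (Fin N), (fderiv ℝ u x (x - x₀)) ^ 2)
      ≥ ((N : ℝ) / 2) ^ 2 * ∫ x : EuclideanSpace ℝ (Fin N), (u x) ^ 2 :=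
  stmt_14_general N x₀ u hu hus
end

section
/- Let N ≥ 1 be an integer, Ω ⊂ ℝ^N a nonempty bounded open set, x₀ ∈ Ω, and a, b : ℝ^N → ℝ continuously differentiable on Ω. Suppose a admits the expansion of order k at x₀ with coefficient A_k > 0 where k = 2, and b admits the expansion of order l at x₀ with coefficient B_l > 0 where l > 2. Let λ₁ > 0 and let φ₁ : ℝ^N → ℝ be a Lipschitz function vanishing outside Ω, positive on Ω, and satisfying ∫_Ω |∇φ₁(x)|² dx = λ₁ ∫_Ω φ₁(x)² dx, where ∇φ₁ denotes the almost-everywhere defined gradient. Then for every δ > 0 there exists a Lipschitz function ψ : ℝ^N → ℝ with compact support contained in Ω and ∫_Ω ψ² dx > 0 such that (1/4)∫_Ω (ã(x)+b̃(x))|∇ψ(x)|² dx ≤ ((A₂/2) λ₁ diam(Ω)² + δ) ∫_Ω ψ(x)² dx, where diam(Ω) is the diameter of Ω. -/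
/-!
Put `g = |∇φ₁|²`, `D = diam Ω`, `Q = ∫_Ω φ₁²` and
`F(s) = ∫_Ω (a + b)(x₀ + s (y - x₀)) g(y) dy`, so that
`F'(s) = ∫_Ω ∇(a + b)(x₀ + s (y - x₀)) · (y - x₀) g(y) dy`.
Near `x₀` the two expansions give `(a + b)(x) - (a + b)(x₀) ≤ (A₂ + η) |x - x₀|²` (the order
`l > 2` term of `b` is negligible against `|x - x₀|²`), hence
`F(ξ₀) - F(0) ≤ (A₂ + η) ξ₀² D² λ₁ Q` for small `ξ₀`. The mean value theorem applied to
`F(s) - κ Q s² / 2`, with `κ = 2 A₂ λ₁ D² + 4 δ`, then yields `ξ ∈ (0, ξ₀)` with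
`F'(ξ) < κ ξ Q`. The dilate `ψ(x) = φ₁(x₀ + ξ⁻¹ (x - x₀))` is supported in `B(x₀, ξ D) ⊆ Ω`, and
the substitution `x = x₀ + ξ (z - x₀)` gives `∫_Ω ψ² = ξ^N Q` and
`∫_Ω (ã + b̃) |∇ψ|² = ξ^(N-1) F'(ξ) < κ ξ^N Q`.
-/

open MeasureTheory Filter Topology Metric Set

theorem eventually_le_add_mul_of_tendsto_div {α : Type*} {l : Filter α} {f r : α → ℝ} {A ε : ℝ}
    (h : Tendsto (fun x => (f x - A * r x) / r x) l (𝓝 0)) (hr : ∀ᶠ x in l, 0 < r x)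
    (hε : 0 < ε) : ∀ᶠ x in l, f x ≤ (A + ε) * r x := by
  filter_upwards [h.eventually (gt_mem_nhds hε), hr] with x hx hrx
  rw [div_lt_iff₀ hrx] at hx
  linarith

theorem eventually_mul_rpow_le_mul_rpow {c ε p q : ℝ} (hqp : q < p) (hε : 0 < ε) :
    ∀ᶠ t in 𝓝[>] (0 : ℝ), c * t ^ p ≤ ε * t ^ q := by
  have hlim : Tendsto (fun t : ℝ => c * t ^ (p - q)) (𝓝 0) (𝓝 0) := by
    simpa [Real.zero_rpow (sub_pos.2 hqp).ne'] using
      ((Real.continuousAt_rpow_const 0 (p - q) (Or.inr (sub_pos.2 hqp).le)).const_mul c).tendsto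
  filter_upwards [nhdsWithin_le_nhds (hlim.eventually (gt_mem_nhds hε)), self_mem_nhdsWithin]
    with t ht (htpos : 0 < t)
  calc c * t ^ p = c * t ^ (p - q) * t ^ q := by
        rw [mul_assoc, ← Real.rpow_add htpos, sub_add_cancel]
    _ ≤ ε * t ^ q := by gcongr

theorem eventually_add_sub_le_of_expansions {E : Type*} [NormedAddCommGroup E] {a b : E → ℝ}
    {x₀ : E} {A B l η : ℝ} (hl : 2 < l) (hη : 0 < η)
    (ha : Tendsto (fun x => (a x - a x₀ - A * ‖x - x₀‖ ^ 2) / ‖x - x₀‖ ^ 2) (𝓝[≠] x₀) (𝓝 0))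
    (hb : Tendsto (fun x => (b x - b x₀ - B * ‖x - x₀‖ ^ l) / ‖x - x₀‖ ^ l) (𝓝[≠] x₀) (𝓝 0)) :
    ∀ᶠ x in 𝓝 x₀, (a + b) x - (a + b) x₀ ≤ (A + η) * ‖x - x₀‖ ^ 2 := by
  have hpos : ∀ᶠ x in 𝓝[≠] x₀, 0 < ‖x - x₀‖ :=
    eventually_mem_nhdsWithin.mono fun x hx => norm_pos_iff.2 (sub_ne_zero.2 hx)
  have ha' := eventually_le_add_mul_of_tendsto_div (f := fun x => a x - a x₀) ha
    (hpos.mono fun x hx => pow_pos hx 2) (half_pos hη)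
  have hb' := eventually_le_add_mul_of_tendsto_div (f := fun x => b x - b x₀) hb
    (hpos.mono fun x hx => Real.rpow_pos_of_pos hx l) one_pos
  have hsmall := (tendsto_norm_sub_self_nhdsNE x₀).eventually
    (eventually_mul_rpow_le_mul_rpow (c := B + 1) hl (half_pos hη))
  have hne : ∀ᶠ x in 𝓝[≠] x₀, (a + b) x - (a + b) x₀ ≤ (A + η) * ‖x - x₀‖ ^ 2 := by
    filter_upwards [ha', hb', hsmall] with x hax hbx hx
    simp only [Real.rpow_two] at hx
    simp only [Pi.add_apply]
    linarith
  filter_upwards [eventually_nhdsWithin_iff.1 hne] with x hx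
  rcases eq_or_ne x x₀ with rfl | hxx
  · simp
  · exact hx hxx

theorem exists_deriv_lt_mul_of_sub_lt {F F' : ℝ → ℝ} {ξ₀ c : ℝ} (hξ₀ : 0 < ξ₀)
    (hF : ∀ s ∈ Icc 0 ξ₀, HasDerivAt F (F' s) s) (hlt : F ξ₀ - F 0 < c / 2 * ξ₀ ^ 2) :
    ∃ ξ ∈ Ioo 0 ξ₀, F' ξ < c * ξ := by
  have hΦ : ∀ s ∈ Icc 0 ξ₀, HasDerivAt (fun s => F s - c / 2 * s ^ 2) (F' s - c * s) s :=
    fun s hs => ((hF s hs).sub ((hasDerivAt_pow 2 s).const_mul (c / 2))).congr_deriv (by ring)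
  obtain ⟨ξ, hξ, hslope⟩ := exists_hasDerivAt_eq_slope _ _ hξ₀
    (fun s hs => (hΦ s hs).continuousAt.continuousWithinAt)
    fun s hs => hΦ s (Ioo_subset_Icc_self hs)
  refine ⟨ξ, hξ, ?_⟩
  have : (F ξ₀ - c / 2 * ξ₀ ^ 2 - (F 0 - c / 2 * 0 ^ 2)) / (ξ₀ - 0) < 0 :=
    div_neg_of_neg_of_pos (by linarith) (by linarith)
  linarith

theorem setIntegral_sq_pos_of_ne_zero {X : Type*} [MetricSpace X] [ProperSpace X]
    [MeasurableSpace X] [OpensMeasurableSpace X] {μ : Measure X} [μ.IsOpenPosMeasure]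
    [IsFiniteMeasureOnCompacts μ] {Ω : Set X} {φ : X → ℝ} (hΩo : IsOpen Ω)
    (hΩb : Bornology.IsBounded Ω) (hne : Ω.Nonempty) (hφ : Continuous φ)
    (hφΩ : ∀ x ∈ Ω, φ x ≠ 0) : 0 < ∫ x in Ω, φ x ^ 2 ∂μ := by
  have hint : IntegrableOn (fun x => φ x ^ 2) Ω μ :=
    ((hφ.pow 2).continuousOn.integrableOn_compact hΩb.isCompact_closure).mono_set subset_closure
  rw [setIntegral_pos_iff_support_of_nonneg_ae (ae_of_all _ fun x => sq_nonneg _) hint]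
  exact (hΩo.measure_pos μ hne).trans_le
    (measure_mono fun y hy => ⟨pow_ne_zero 2 (hφΩ y hy), hy⟩)

section Homothety

variable {E : Type*} [NormedAddCommGroup E] [NormedSpace ℝ E]

theorem fderiv_comp_homothety {F : Type*} [NormedAddCommGroup F] [NormedSpace ℝ F] (φ : E → F)
    (x₀ : E) (c : ℝ) (x : E) :
    fderiv ℝ (fun z => φ (x₀ + c • (z - x₀))) x = c • fderiv ℝ φ (x₀ + c • (x - x₀)) := by
  simp only [sub_eq_add_neg]
  rw [fderiv_comp_add_right (f := fun w => φ (x₀ + c • w)),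
    fderiv_comp_smul (f := fun w => φ (x₀ + w)), fderiv_comp_add_left]

theorem lipschitzWith_comp_homothety {φ : E → ℝ} {C : NNReal} (hφ : LipschitzWith C φ) (x₀ : E)
    (c : ℝ) : LipschitzWith (C * ‖c‖₊) fun x => φ (x₀ + c • (x - x₀)) := by
  have hS : LipschitzWith ‖c‖₊ fun x : E => x₀ + c • (x - x₀) :=
    LipschitzWith.of_dist_le_mul fun x y => by
      rw [dist_add_left, dist_eq_norm, ← smul_sub, sub_sub_sub_cancel_right, norm_smul,
        dist_eq_norm, coe_nnnorm]
  exact hφ.comp hS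

theorem support_comp_homothety_inv_subset {φ : E → ℝ} {x₀ : E} {R ξ : ℝ} (hξ : 0 < ξ)
    (hφ : Function.support φ ⊆ closedBall x₀ R) :
    Function.support (fun x => φ (x₀ + ξ⁻¹ • (x - x₀))) ⊆ closedBall x₀ (ξ * R) := by
  intro x hx
  have h := mem_closedBall_iff_norm.1 (hφ hx)
  rw [add_sub_cancel_left, norm_smul, Real.norm_eq_abs, abs_inv, abs_of_pos hξ,
    inv_mul_le_iff₀ hξ] at h
  exact mem_closedBall_iff_norm.2 h

section Integration

variable [MeasurableSpace E] [OpensMeasurableSpace E] {μ : Measure E} {Ω U K : Set E}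
  {h g : E → ℝ} {x₀ : E} {R M : ℝ}

theorem integrableOn_comp_homothety_mul (hΩ : MeasurableSet Ω) (hμΩ : μ Ω < ⊤) (hK : IsCompact K)
    (hh : ContinuousOn h K) (hg : AEStronglyMeasurable g (μ.restrict Ω)) (hgM : ∀ y, ‖g y‖ ≤ M)
    {s : ℝ} (hs : MapsTo (fun y => x₀ + s • (y - x₀)) Ω K) :
    IntegrableOn (fun y => h (x₀ + s • (y - x₀)) * g y) Ω μ := by
  obtain ⟨Kh, hKh⟩ := hK.exists_bound_of_continuousOn hh
  refine IntegrableOn.of_bound hμΩ (((hh.comp (by fun_prop) hs).aestronglyMeasurable hΩ).mul hg)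
    (Kh * M) ((ae_restrict_iff' hΩ).2 (ae_of_all _ fun y hy => ?_))
  rw [norm_mul]
  exact mul_le_mul (hKh _ (hs hy)) (hgM y) (norm_nonneg _) ((norm_nonneg _).trans (hKh _ (hs hy)))

theorem hasDerivAt_integral_comp_homothety_mul (hU : IsOpen U) (hh : ContDiffOn ℝ 1 h U)
    (hK : IsCompact K) (hKU : K ⊆ U) (hΩ : MeasurableSet Ω) (hμΩ : μ Ω < ⊤)
    (hR : ∀ y ∈ Ω, ‖y - x₀‖ ≤ R) (hg : AEStronglyMeasurable g (μ.restrict Ω))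
    (hgM : ∀ y, ‖g y‖ ≤ M) {s₀ ε : ℝ} (hε : 0 < ε)
    (hmaps : ∀ s ∈ ball s₀ ε, MapsTo (fun y => x₀ + s • (y - x₀)) Ω K) :
    HasDerivAt (fun s => ∫ y in Ω, h (x₀ + s • (y - x₀)) * g y ∂μ)
      (∫ y in Ω, fderiv ℝ h (x₀ + s₀ • (y - x₀)) (y - x₀) * g y ∂μ) s₀ := by
  have hint : ∀ s ∈ ball s₀ ε, IntegrableOn (fun y => h (x₀ + s • (y - x₀)) * g y) Ω μ :=
    fun s hs => integrableOn_comp_homothety_mul hΩ hμΩ hK (hh.continuousOn.mono hKU) hg hgM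
      (hmaps s hs)
  have hDh : ContinuousOn (fderiv ℝ h) K := (hh.continuousOn_fderiv_of_isOpen hU le_rfl).mono hKU
  obtain ⟨Kd, hKd⟩ := hK.exists_bound_of_continuousOn hDh
  refine (hasDerivAt_integral_of_dominated_loc_of_deriv_le (bound := fun _ => Kd * R * M)
    (F' := fun s y => fderiv ℝ h (x₀ + s • (y - x₀)) (y - x₀) * g y)
    (ball_mem_nhds s₀ hε)
    (eventually_of_mem (ball_mem_nhds s₀ hε) fun s hs => (hint s hs).aestronglyMeasurable)
    (hint s₀ (mem_ball_self hε)) ?_ ?_ (integrableOn_const hμΩ.ne) ?_).2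
  · exact (((hDh.comp (by fun_prop) (hmaps s₀ (mem_ball_self hε))).clm_apply
      (by fun_prop)).aestronglyMeasurable hΩ).mul hg
  · refine (ae_restrict_iff' hΩ).2 (ae_of_all _ fun y hy s hs => ?_)
    have hp := hKd _ (hmaps s hs hy)
    rw [norm_mul]
    refine mul_le_mul ?_ (hgM y) (norm_nonneg _)
      (mul_nonneg ((norm_nonneg _).trans hp) ((norm_nonneg _).trans (hR y hy)))
    exact (ContinuousLinearMap.le_opNorm _ _).trans
      (mul_le_mul hp (hR y hy) (norm_nonneg _) ((norm_nonneg _).trans hp))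
  · refine (ae_restrict_iff' hΩ).2 (ae_of_all _ fun y hy s hs => ?_)
    have hline : HasDerivAt (fun t : ℝ => x₀ + t • (y - x₀)) (y - x₀) s := by
      simpa using ((hasDerivAt_id s).smul_const (y - x₀)).const_add x₀
    have hdiff : DifferentiableAt ℝ h (x₀ + s • (y - x₀)) :=
      (hh.differentiableOn one_ne_zero).differentiableAt (hU.mem_nhds (hKU (hmaps s hs hy)))
    exact (hdiff.hasFDerivAt.comp_hasDerivAt s hline).mul_const (g y)

theorem setIntegral_comp_homothety_mul_sub_le (hΩ : MeasurableSet Ω) (hμΩ : μ Ω < ⊤)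
    (hK : IsCompact K) (hh : ContinuousOn h K) (hR : ∀ y ∈ Ω, ‖y - x₀‖ ≤ R)
    (hg : AEStronglyMeasurable g (μ.restrict Ω)) (hgM : ∀ y, ‖g y‖ ≤ M) (hg0 : ∀ y, 0 ≤ g y)
    {A s : ℝ} (hA : 0 ≤ A) (hexp : ∀ x ∈ K, h x - h x₀ ≤ A * ‖x - x₀‖ ^ 2)
    (hs : MapsTo (fun y => x₀ + s • (y - x₀)) Ω K) :
    ∫ y in Ω, h (x₀ + s • (y - x₀)) * g y ∂μ - ∫ y in Ω, h x₀ * g y ∂μ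
      ≤ A * R ^ 2 * s ^ 2 * ∫ y in Ω, g y ∂μ := by
  have hgint : IntegrableOn g Ω μ :=
    IntegrableOn.of_bound hμΩ hg M ((ae_restrict_iff' hΩ).2 (ae_of_all _ fun y _ => hgM y))
  rw [← integral_sub (integrableOn_comp_homothety_mul hΩ hμΩ hK hh hg hgM hs)
    (hgint.const_mul _), ← integral_const_mul]
  refine setIntegral_mono_on (f := fun y => h (x₀ + s • (y - x₀)) * g y - h x₀ * g y)
    ((integrableOn_comp_homothety_mul hΩ hμΩ hK hh hg hgM hs).sub (hgint.const_mul _))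
    (hgint.const_mul _) hΩ fun y hy => ?_
  have hnorm : ‖x₀ + s • (y - x₀) - x₀‖ ^ 2 ≤ R ^ 2 * s ^ 2 := by
    rw [add_sub_cancel_left, norm_smul, Real.norm_eq_abs, mul_pow, sq_abs, mul_comm]
    gcongr
    exact hR y hy
  calc h (x₀ + s • (y - x₀)) * g y - h x₀ * g y
      = (h (x₀ + s • (y - x₀)) - h x₀) * g y := by ring
    _ ≤ A * (R ^ 2 * s ^ 2) * g y :=
      mul_le_mul_of_nonneg_right ((hexp _ (hs hy)).trans (by gcongr)) (hg0 y)
    _ = _ := by ring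

theorem exists_integral_fderiv_comp_homothety_mul_lt_of_closedBall [ProperSpace E]
    (hU : IsOpen U) (hh : ContDiffOn ℝ 1 h U) (hΩ : MeasurableSet Ω) (hμΩ : μ Ω < ⊤)
    (hR0 : 0 ≤ R) (hR : ∀ y ∈ Ω, ‖y - x₀‖ ≤ R)
    (hg : AEStronglyMeasurable g (μ.restrict Ω)) (hgM : ∀ y, ‖g y‖ ≤ M) (hg0 : ∀ y, 0 ≤ g y)
    {ρ A c : ℝ} (hρ : 0 < ρ) (hρU : closedBall x₀ ρ ⊆ U) (hA : 0 ≤ A)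
    (hexp : ∀ x ∈ closedBall x₀ ρ, h x - h x₀ ≤ A * ‖x - x₀‖ ^ 2)
    (hc : A * R ^ 2 * ∫ y in Ω, g y ∂μ < c) :
    ∃ ξ, 0 < ξ ∧ ξ * R ≤ ρ ∧
      ∫ y in Ω, fderiv ℝ h (x₀ + ξ • (y - x₀)) (y - x₀) * g y ∂μ < 2 * c * ξ := by
  set ξ₀ := ρ / (2 * (R + 1)) with hξ₀_def
  have hξ₀ : 0 < ξ₀ := by positivity
  have hξ₀R : 2 * ξ₀ * R ≤ ρ := by
    have : 2 * ξ₀ * (R + 1) = ρ := by rw [hξ₀_def]; field_simp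
    nlinarith
  have hmaps : ∀ s, |s| < 2 * ξ₀ → MapsTo (fun y => x₀ + s • (y - x₀)) Ω (closedBall x₀ ρ) := by
    intro s hs y hy
    rw [mem_closedBall_iff_norm, add_sub_cancel_left, norm_smul, Real.norm_eq_abs]
    exact (mul_le_mul hs.le (hR y hy) (norm_nonneg _) (by positivity)).trans hξ₀R
  have hderiv : ∀ s ∈ Icc 0 ξ₀, HasDerivAt (fun s => ∫ y in Ω, h (x₀ + s • (y - x₀)) * g y ∂μ)
      (∫ y in Ω, fderiv ℝ h (x₀ + s • (y - x₀)) (y - x₀) * g y ∂μ) s := fun s hs =>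
    hasDerivAt_integral_comp_homothety_mul hU hh (isCompact_closedBall x₀ ρ) hρU hΩ hμΩ hR hg hgM
      hξ₀ fun t ht => hmaps t <| by
        rw [mem_ball, Real.dist_eq, abs_lt] at ht
        rw [abs_lt]
        constructor <;> linarith [hs.1, hs.2]
  have hsub := setIntegral_comp_homothety_mul_sub_le hΩ hμΩ (isCompact_closedBall x₀ ρ)
    (hh.continuousOn.mono hρU) hR hg hgM hg0 hA hexp
    (hmaps ξ₀ (by rw [abs_of_pos hξ₀]; linarith))
  obtain ⟨ξ, hξ, hlt⟩ := exists_deriv_lt_mul_of_sub_lt hξ₀ hderiv (c := 2 * c) <| by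
    simp only [zero_smul, add_zero]
    nlinarith [pow_pos hξ₀ 2]
  exact ⟨ξ, hξ.1, (mul_le_mul_of_nonneg_right hξ.2.le hR0).trans (by nlinarith), hlt⟩

theorem exists_integral_fderiv_comp_homothety_mul_lt [ProperSpace E] (hU : IsOpen U)
    (hh : ContDiffOn ℝ 1 h U) (hx₀ : x₀ ∈ U) (hΩ : MeasurableSet Ω) (hμΩ : μ Ω < ⊤) (hR0 : 0 ≤ R)
    (hR : ∀ y ∈ Ω, ‖y - x₀‖ ≤ R) (hg : AEStronglyMeasurable g (μ.restrict Ω))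
    (hgM : ∀ y, ‖g y‖ ≤ M) (hg0 : ∀ y, 0 ≤ g y) {A c : ℝ} (hA : 0 ≤ A)
    (hexp : ∀ η > 0, ∀ᶠ x in 𝓝 x₀, h x - h x₀ ≤ (A + η) * ‖x - x₀‖ ^ 2)
    (hc : A * R ^ 2 * ∫ y in Ω, g y ∂μ < c) :
    ∃ ξ, 0 < ξ ∧ closedBall x₀ (ξ * R) ⊆ U ∧
      ∫ y in Ω, fderiv ℝ h (x₀ + ξ • (y - x₀)) (y - x₀) * g y ∂μ < 2 * c * ξ := by
  obtain ⟨η, hηc, hη⟩ : ∃ η, (A + η) * R ^ 2 * (∫ y in Ω, g y ∂μ) < c ∧ 0 < η := by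
    have hlim : Tendsto (fun η => (A + η) * R ^ 2 * ∫ y in Ω, g y ∂μ) (𝓝[>] 0)
        (𝓝 (A * R ^ 2 * ∫ y in Ω, g y ∂μ)) :=
      tendsto_nhdsWithin_of_tendsto_nhds ((Continuous.tendsto' (by fun_prop) 0 _ (by simp)))
    exact ((hlim.eventually (gt_mem_nhds hc)).and self_mem_nhdsWithin).exists
  obtain ⟨ρ, hρ, hρU⟩ := nhds_basis_closedBall.eventually_iff.1 ((hexp η hη).and (hU.mem_nhds hx₀))
  obtain ⟨ξ, hξ, hξR, hlt⟩ := exists_integral_fderiv_comp_homothety_mul_lt_of_closedBall hU hh hΩ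
    hμΩ hR0 hR hg hgM hg0 hρ (fun x hx => (hρU hx).2) (add_nonneg hA hη.le)
    (fun x hx => (hρU hx).1) hηc
  exact ⟨ξ, hξ, (closedBall_subset_closedBall hξR).trans fun x hx => (hρU hx).2, hlt⟩

end Integration

section HaarMeasure

variable [MeasurableSpace E] [BorelSpace E] [FiniteDimensional ℝ E] (μ : Measure E)
  [μ.IsAddHaarMeasure]

theorem integral_comp_homothety_inv {F : Type*} [NormedAddCommGroup F] [NormedSpace ℝ F]
    (f : E → F) (x₀ : E) {ξ : ℝ} (hξ : 0 < ξ) :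
    ∫ x, f (x₀ + ξ⁻¹ • (x - x₀)) ∂μ = ξ ^ Module.finrank ℝ E • ∫ x, f x ∂μ := by
  rw [integral_sub_right_eq_self (fun u => f (x₀ + ξ⁻¹ • u)) x₀,
    Measure.integral_comp_inv_smul μ (fun u => f (x₀ + u)) ξ, integral_add_left_eq_self,
    abs_of_pos (pow_pos hξ _)]

theorem integral_clm_mul_norm_fderiv_comp_homothety_sq (L : E → E →L[ℝ] ℝ) (φ : E → ℝ) (x₀ : E)
    {ξ : ℝ} (hξ : 0 < ξ) :
    ∫ x, L x (x - x₀) * ‖fderiv ℝ (fun x => φ (x₀ + ξ⁻¹ • (x - x₀))) x‖ ^ 2 ∂μ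
      = ξ ^ Module.finrank ℝ E * ξ⁻¹ *
          ∫ z, L (x₀ + ξ • (z - x₀)) (z - x₀) * ‖fderiv ℝ φ z‖ ^ 2 ∂μ := by
  have hST : ∀ x : E, x₀ + ξ • ((x₀ + ξ⁻¹ • (x - x₀)) - x₀) = x := fun x => by
    rw [add_sub_cancel_left, smul_smul, mul_inv_cancel₀ hξ.ne', one_smul, add_sub_cancel]
  have hpt : (fun x => L x (x - x₀) * ‖fderiv ℝ (fun x => φ (x₀ + ξ⁻¹ • (x - x₀))) x‖ ^ 2)
      = fun x => (fun z => ξ⁻¹ * (L (x₀ + ξ • (z - x₀)) (z - x₀) * ‖fderiv ℝ φ z‖ ^ 2))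
          (x₀ + ξ⁻¹ • (x - x₀)) := funext fun x => by
    beta_reduce
    rw [fderiv_comp_homothety, hST, add_sub_cancel_left, map_smul, smul_eq_mul, norm_smul,
      Real.norm_eq_abs, abs_of_pos (inv_pos.2 hξ)]
    ring
  rw [hpt, integral_comp_homothety_inv μ
    (fun z => ξ⁻¹ * (L (x₀ + ξ • (z - x₀)) (z - x₀) * ‖fderiv ℝ φ z‖ ^ 2)) x₀ hξ,
    integral_const_mul, smul_eq_mul]
  ring

theorem setIntegral_sq_comp_homothety_inv {Ω : Set E} {φ : E → ℝ} {x₀ : E} {ξ : ℝ} (hξ : 0 < ξ)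
    (hφ : ∀ y ∉ Ω, φ y = 0) (hψ : tsupport (fun x => φ (x₀ + ξ⁻¹ • (x - x₀))) ⊆ Ω) :
    ∫ x in Ω, φ (x₀ + ξ⁻¹ • (x - x₀)) ^ 2 ∂μ = ξ ^ Module.finrank ℝ E * ∫ z in Ω, φ z ^ 2 ∂μ := by
  rw [setIntegral_eq_integral_of_forall_compl_eq_zero fun x hx => by
      rw [image_eq_zero_of_notMem_tsupport fun h => hx (hψ h), zero_pow two_ne_zero],
    setIntegral_eq_integral_of_forall_compl_eq_zero fun z hz => by
      rw [hφ z hz, zero_pow two_ne_zero]]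
  exact integral_comp_homothety_inv μ (fun z => φ z ^ 2) x₀ hξ

theorem setIntegral_clm_mul_norm_fderiv_comp_homothety_sq {Ω : Set E} (L : E → E →L[ℝ] ℝ)
    {φ : E → ℝ} {x₀ : E} {ξ : ℝ} (hξ : 0 < ξ) (hφ : ∀ y ∉ Ω, fderiv ℝ φ y = 0)
    (hψ : tsupport (fun x => φ (x₀ + ξ⁻¹ • (x - x₀))) ⊆ Ω) :
    ∫ x in Ω, L x (x - x₀) * ‖fderiv ℝ (fun x => φ (x₀ + ξ⁻¹ • (x - x₀))) x‖ ^ 2 ∂μ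
      = ξ ^ Module.finrank ℝ E * ξ⁻¹ *
          ∫ z in Ω, L (x₀ + ξ • (z - x₀)) (z - x₀) * ‖fderiv ℝ φ z‖ ^ 2 ∂μ := by
  rw [setIntegral_eq_integral_of_forall_compl_eq_zero fun x hx => by
      rw [fderiv_of_notMem_tsupport ℝ fun h => hx (hψ h), norm_zero, zero_pow two_ne_zero,
        mul_zero],
    setIntegral_eq_integral_of_forall_compl_eq_zero fun z hz => by
      rw [hφ z hz, norm_zero, zero_pow two_ne_zero, mul_zero]]
  exact integral_clm_mul_norm_fderiv_comp_homothety_sq μ L φ x₀ hξ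

end HaarMeasure

end Homothety

theorem stmt_18_general
    (N : ℕ)
    (Ω : Set (EuclideanSpace ℝ (Fin N)))
    (hΩo : IsOpen Ω) (hΩb : Bornology.IsBounded Ω)
    (x₀ : EuclideanSpace ℝ (Fin N)) (hx₀ : x₀ ∈ Ω)
    (a b : EuclideanSpace ℝ (Fin N) → ℝ)
    (ha : ContDiffOn ℝ 1 a Ω) (hb : ContDiffOn ℝ 1 b Ω)
    (A₂ l B : ℝ) (hA₂ : 0 < A₂) (hl : 2 < l)
    (hexpa : Tendsto (fun x => (a x - a x₀ - A₂ * ‖x - x₀‖ ^ 2) / ‖x - x₀‖ ^ 2)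
      (𝓝[≠] x₀) (𝓝 0))
    (hexpb : Tendsto (fun x => (b x - b x₀ - B * ‖x - x₀‖ ^ l) / ‖x - x₀‖ ^ l)
      (𝓝[≠] x₀) (𝓝 0))
    (lam₁ : ℝ) (hlam₁ : 0 < lam₁)
    (φ₁ : EuclideanSpace ℝ (Fin N) → ℝ)
    (hφ₁lip : ∃ C : NNReal, LipschitzWith C φ₁)
    (hφ₁0 : ∀ x ∉ Ω, φ₁ x = 0)
    (hφ₁pos : ∀ x ∈ Ω, 0 < φ₁ x)
    (hφ₁eig : (∫ x in Ω, ‖fderiv ℝ φ₁ x‖ ^ 2) = lam₁ * ∫ x in Ω, (φ₁ x) ^ 2) :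
    ∀ δ : ℝ, 0 < δ → ∃ ψ : EuclideanSpace ℝ (Fin N) → ℝ,
      (∃ C : NNReal, LipschitzWith C ψ) ∧
      HasCompactSupport ψ ∧ tsupport ψ ⊆ Ω ∧
      0 < (∫ x in Ω, (ψ x) ^ 2) ∧
      (1 / 4) * (∫ x in Ω,
          (fderiv ℝ a x (x - x₀) + fderiv ℝ b x (x - x₀)) * ‖fderiv ℝ ψ x‖ ^ 2)
        ≤ ((A₂ / 2) * lam₁ * Metric.diam Ω ^ 2 + δ) * ∫ x in Ω, (ψ x) ^ 2 := by
  intro δ hδ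
  obtain ⟨C, hC⟩ := hφ₁lip
  set D := Metric.diam Ω
  set Q := ∫ x in Ω, φ₁ x ^ 2
  have hD : ∀ y ∈ Ω, ‖y - x₀‖ ≤ D := fun y hy => by
    simpa [dist_eq_norm] using Metric.dist_le_diam_of_mem hΩb hy hx₀
  have hφ₁nonneg : ∀ x, 0 ≤ φ₁ x := fun x =>
    (em (x ∈ Ω)).elim (fun hx => (hφ₁pos x hx).le) fun hx => (hφ₁0 x hx).ge
  have hgrad0 : ∀ y ∉ Ω, fderiv ℝ φ₁ y = 0 := fun y hy =>
    IsLocalMin.fderiv_eq_zero (Eventually.of_forall fun x => by rw [hφ₁0 y hy]; exact hφ₁nonneg x)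
  have hQ : 0 < Q := setIntegral_sq_pos_of_ne_zero hΩo hΩb ⟨x₀, hx₀⟩ hC.continuous
    fun x hx => (hφ₁pos x hx).ne'
  obtain ⟨ξ, hξ, hξΩ, hlt⟩ := exists_integral_fderiv_comp_homothety_mul_lt (μ := volume)
    (h := a + b) (g := fun y => ‖fderiv ℝ φ₁ y‖ ^ 2) (M := C ^ 2)
    (c := (A₂ * lam₁ * D ^ 2 + 2 * δ) * Q) hΩo (ha.add hb) hx₀ hΩo.measurableSet
    hΩb.measure_lt_top Metric.diam_nonneg hD
    ((measurable_fderiv ℝ φ₁).norm.pow_const 2).aestronglyMeasurable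
    (fun y => by
      rw [norm_pow, norm_norm]
      exact pow_le_pow_left₀ (norm_nonneg _) (norm_fderiv_le_of_lipschitz ℝ hC) 2)
    (fun y => sq_nonneg _) hA₂.le
    (fun η hη => eventually_add_sub_le_of_expansions hl hη hexpa hexpb)
    (by rw [hφ₁eig]; nlinarith [mul_pos hδ hQ])
  set ψ := fun x => φ₁ (x₀ + ξ⁻¹ • (x - x₀))
  have hsupp : Function.support ψ ⊆ closedBall x₀ (ξ * D) :=
    support_comp_homothety_inv_subset hξ fun y hy =>
      mem_closedBall_iff_norm.2 (hD y (by_contra fun h => hy (hφ₁0 y h)))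
  have htsupp : tsupport ψ ⊆ Ω := (closure_minimal hsupp isClosed_closedBall).trans hξΩ
  have hψsq : ∫ x in Ω, ψ x ^ 2 = ξ ^ N * Q := by
    simpa using setIntegral_sq_comp_homothety_inv volume hξ hφ₁0 htsupp
  have hab : ∀ x ∈ Ω, fderiv ℝ a x + fderiv ℝ b x = fderiv ℝ (a + b) x := fun x hx =>
    (fderiv_add ((ha.differentiableOn one_ne_zero).differentiableAt (hΩo.mem_nhds hx))
      ((hb.differentiableOn one_ne_zero).differentiableAt (hΩo.mem_nhds hx))).symm
  have hgrad : ∫ x in Ω, (fderiv ℝ a x (x - x₀) + fderiv ℝ b x (x - x₀)) * ‖fderiv ℝ ψ x‖ ^ 2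
      = ξ ^ N * ξ⁻¹ * ∫ z in Ω, fderiv ℝ (a + b) (x₀ + ξ • (z - x₀)) (z - x₀)
          * ‖fderiv ℝ φ₁ z‖ ^ 2 := by
    rw [setIntegral_congr_fun (g := fun x => fderiv ℝ (a + b) x (x - x₀) * ‖fderiv ℝ ψ x‖ ^ 2)
      hΩo.measurableSet fun x hx => by beta_reduce; rw [← hab x hx]; rfl]
    simpa using setIntegral_clm_mul_norm_fderiv_comp_homothety_sq volume (fderiv ℝ (a + b)) hξ
      hgrad0 htsupp
  refine ⟨ψ, ⟨_, lipschitzWith_comp_homothety hC x₀ ξ⁻¹⟩,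
    .of_support_subset_isCompact (isCompact_closedBall _ _) hsupp, htsupp,
    by rw [hψsq]; positivity, ?_⟩
  rw [hgrad, hψsq]
  calc 1 / 4 * (ξ ^ N * ξ⁻¹ * _)
      ≤ 1 / 4 * (ξ ^ N * ξ⁻¹ * (2 * ((A₂ * lam₁ * D ^ 2 + 2 * δ) * Q) * ξ)) := by gcongr
    _ = _ := by field_simp; ring

theorem stmt_18
    (N : ℕ) (hN : 1 ≤ N)
    (Ω : Set (EuclideanSpace ℝ (Fin N)))
    (hΩo : IsOpen Ω) (hΩb : Bornology.IsBounded Ω) (hΩne : Ω.Nonempty)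
    (x₀ : EuclideanSpace ℝ (Fin N)) (hx₀ : x₀ ∈ Ω)
    (a b : EuclideanSpace ℝ (Fin N) → ℝ)
    (ha : ContDiffOn ℝ 1 a Ω) (hb : ContDiffOn ℝ 1 b Ω)
    (A₂ l B : ℝ) (hA₂ : 0 < A₂) (hl : 2 < l) (hB : 0 < B)
    (hexpa : Tendsto (fun x => (a x - a x₀ - A₂ * ‖x - x₀‖ ^ 2) / ‖x - x₀‖ ^ 2)
      (𝓝[≠] x₀) (𝓝 0))
    (hexpb : Tendsto (fun x => (b x - b x₀ - B * ‖x - x₀‖ ^ l) / ‖x - x₀‖ ^ l)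
      (𝓝[≠] x₀) (𝓝 0))
    (lam₁ : ℝ) (hlam₁ : 0 < lam₁)
    (φ₁ : EuclideanSpace ℝ (Fin N) → ℝ)
    (hφ₁lip : ∃ C : NNReal, LipschitzWith C φ₁)
    (hφ₁0 : ∀ x ∉ Ω, φ₁ x = 0)
    (hφ₁pos : ∀ x ∈ Ω, 0 < φ₁ x)
    (hφ₁eig : (∫ x in Ω, ‖fderiv ℝ φ₁ x‖ ^ 2) = lam₁ * ∫ x in Ω, (φ₁ x) ^ 2) :
    ∀ δ : ℝ, 0 < δ → ∃ ψ : EuclideanSpace ℝ (Fin N) → ℝ,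
      (∃ C : NNReal, LipschitzWith C ψ) ∧
      HasCompactSupport ψ ∧ tsupport ψ ⊆ Ω ∧
      0 < (∫ x in Ω, (ψ x) ^ 2) ∧
      (1 / 4) * (∫ x in Ω,
          (fderiv ℝ a x (x - x₀) + fderiv ℝ b x (x - x₀)) * ‖fderiv ℝ ψ x‖ ^ 2)
        ≤ ((A₂ / 2) * lam₁ * Metric.diam Ω ^ 2 + δ) * ∫ x in Ω, (ψ x) ^ 2 :=
  stmt_18_general N Ω hΩo hΩb x₀ hx₀ a b ha hb A₂ l B hA₂ hl hexpa hexpb lam₁ hlam₁ φ₁ hφ₁lip hφ₁0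
    hφ₁pos hφ₁eig
end
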